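/- arXiv:2210.14301 — 9 statements merged into one kernel-verified Lean document; each statement's English description precedes it below -/
import Mathlib

section
/- If n ≥ 2 is odd, then there is no complementary binary Gray code on n bits; that is, there is no cyclic sequence G : Fin (2^n) → (Fin n → Bool) enumerating all binary n-tuples such that consecutive tuples (cyclically) differ in exactly one coordinate and G((i + 2^(n-1)) mod 2^n) is the bitwise complement of G(i) for all i. -/
open Finset

/-- no complementary binary Gray code on `n` bits for odd `n ≥ 2`. -/
theorem no_complementary_binary_gray_code_of_odd (n : ℕ) (hn : 2 ≤ n) (hodd : Odd n) :
    ¬ ∃ G : Fin (2 ^ n) → (Fin n → Bool),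
      Function.Bijective G ∧
      (∀ i : Fin (2 ^ n), hammingDist (G i) (G (i + 1)) = 1) ∧
      (∀ i : Fin (2 ^ n), G (i + (Fin.ofNat (2 ^ n) (2 ^ (n - 1)))) = fun j => ! (G i j)) := by
  rintro ⟨G, -, hstep, hcomp⟩
  set s : (Fin n → Bool) → ZMod 2 := fun w => ∑ j, if w j then 1 else 0 with hs
  have key : ∀ w w' : Fin n → Bool, (hammingDist w w' : ZMod 2) = s w + s w' := by
    intro w w'
    rw [hammingDist]
    rw [Finset.card_filter]
    push_cast
    rw [hs]
    simp only
    rw [← Finset.sum_add_distrib]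
    apply Finset.sum_congr rfl
    intro j _
    cases hw : w j <;> cases hw' : w' j <;> simp <;> decide
  have step : ∀ i, s (G (i + 1)) = s (G i) + 1 := by
    intro i
    have h := key (G i) (G (i + 1))
    rw [hstep i] at h
    have := congrArg (fun x => s (G i) + x) h
    rw [← add_assoc, CharTwo.add_self_eq_zero, zero_add] at this
    rw [← this]; ring
  open Fin.NatCast in
  have iter : ∀ (i : Fin (2 ^ n)) (k : ℕ), s (G (i + k)) = s (G i) + k := by
    intro i k
    induction k with
    | zero => simp
    | succ k ih =>
      have : ((k + 1 : ℕ) : Fin (2 ^ n)) = (k : Fin (2 ^ n)) + 1 := by push_cast; ring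
      rw [this, ← add_assoc, step, ih]
      push_cast; ring
  have hc := hcomp 0
  have h1 := iter 0 (2 ^ (n - 1))
  erw [hc] at h1
  have hsc : s (fun j => !(G 0 j)) = (n : ZMod 2) + s (G 0) := by
    rw [hs]; simp only
    have hpt : ∀ j : Fin n, (if (!G 0 j) = true then (1 : ZMod 2) else 0)
        = 1 + (if G 0 j = true then 1 else 0) := by
      intro j; cases G 0 j <;> simp <;> decide
    rw [Finset.sum_congr rfl fun j _ => hpt j, Finset.sum_add_distrib,
      Finset.sum_const, Finset.card_univ, Fintype.card_fin, nsmul_eq_mul, mul_one]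
  have hn1 : (n : ZMod 2) = 1 := by
    obtain ⟨k, hk⟩ := hodd
    subst hk; push_cast
    have h2 : (2 : ZMod 2) = 0 := by decide
    rw [h2]; ring
  have hp : ((2 ^ (n - 1) : ℕ) : ZMod 2) = 0 := by
    push_cast
    have h2 : (2 : ZMod 2) = 0 := by decide
    rw [h2, zero_pow]
    omega
  rw [hsc, hn1, hp, add_zero] at h1
  have : (1 : ZMod 2) = 0 := by
    have := congrArg (fun x => x - s (G 0)) h1
    simpa using this
  exact one_ne_zero this
end

section
/- If P : Fin (2^(n-1)) → (Fin (n-1) → Bool) is a (non-cyclic) binary Gray code listing all (n-1)-tuples with P(0) the all-zeros tuple and P(2^(n-1)-1) the all-ones tuple, then the sequence of length 2^n obtained by first listing 0·P(i) (prefix bit 0) for i = 0,…,2^(n-1)-1 and then 1·(complement of P(i)) for i = 0,…,2^(n-1)-1 is a cyclic complementary binary Gray code on n bits. -/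
lemma hd_succ' {n : ℕ} (hn : 1 ≤ n) (f g : Fin n → Bool) :
    hammingDist f g = (if f ⟨0, by omega⟩ = g ⟨0, by omega⟩ then 0 else 1)
      + hammingDist (fun k : Fin (n-1) => f ⟨k.val+1, by have := k.isLt; omega⟩)
          (fun k : Fin (n-1) => g ⟨k.val+1, by have := k.isLt; omega⟩) := by
  obtain ⟨m, rfl⟩ : ∃ m, n = m + 1 := ⟨n-1, by omega⟩
  simp only [hammingDist, Finset.card_filter]
  rw [Fin.sum_univ_succ]
  congr 1
  by_cases h : f 0 = g 0 <;> simp [show f ⟨0, by omega⟩ = f 0 from rfl, h]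

/-- from a Gray path `P` on `n-1` bits from all-zeros to all-ones, the
sequence `0·P, 1·(complement of P)` is a cyclic complementary binary Gray code on `n` bits. -/
theorem complementary_from_path (n : ℕ) (hn : 1 ≤ n)
    (P : Fin (2 ^ (n - 1)) → (Fin (n - 1) → Bool))
    (hPbij : Function.Bijective P)
    (hPgray : ∀ i : ℕ, (h : i + 1 < 2 ^ (n - 1)) →
      hammingDist (P ⟨i, by omega⟩) (P ⟨i + 1, h⟩) = 1)
    (hP0 : P ⟨0, by positivity⟩ = fun _ => false)
    (hPlast : P ⟨2 ^ (n - 1) - 1, by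
        have : 0 < 2 ^ (n - 1) := by positivity
        omega⟩ = fun _ => true)
    (G : Fin (2 ^ n) → (Fin n → Bool))
    (hG : ∀ i : Fin (2 ^ n), ∀ j : Fin n,
      G i j =
        if hj : j.val = 0 then decide (2 ^ (n - 1) ≤ i.val)
        else
          if hi : i.val < 2 ^ (n - 1) then
            P ⟨i.val, hi⟩ ⟨j.val - 1, by have := j.isLt; omega⟩
          else
            ! P ⟨i.val - 2 ^ (n - 1), by
                have h := i.isLt
                have h2 : (2:ℕ) ^ n = 2 ^ (n - 1) * 2 := by
                  conv_lhs => rw [show n = (n - 1) + 1 by omega]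
                  exact pow_succ 2 (n - 1)
                omega⟩ ⟨j.val - 1, by have := j.isLt; omega⟩) :
    Function.Bijective G ∧
      (∀ i : Fin (2 ^ n), hammingDist (G i) (G (i + 1)) = 1) ∧
      (∀ i : Fin (2 ^ n),
        G (i + (Fin.ofNat (2 ^ n) (2 ^ (n - 1)) : Fin (2 ^ n))) = fun j => ! (G i j)) := by
  have hN : 0 < 2 ^ (n - 1) := by positivity
  have htot : 2 ^ n = 2 ^ (n - 1) + 2 ^ (n - 1) := by
    conv_lhs => rw [show n = (n - 1) + 1 by omega]
    rw [pow_succ]; omega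
  have hcast : (Fin.ofNat (2 ^ n) (2 ^ (n - 1)) : Fin (2 ^ n)).val = 2 ^ (n - 1) := by
    rw [Fin.val_ofNat]; exact Nat.mod_eq_of_lt (by omega)
  have hone : (1 : Fin (2 ^ n)).val = 1 := by
    rw [Fin.val_one']; exact Nat.mod_eq_of_lt (by omega)
  have hhead : ∀ i : Fin (2 ^ n), G i ⟨0, by omega⟩ = decide (2 ^ (n - 1) ≤ i.val) := by
    intro i; rw [hG]; exact dif_pos rfl
  have htail1 : ∀ (i : Fin (2 ^ n)) (hi : i.val < 2 ^ (n - 1)) (k : Fin (n - 1)),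
      G i ⟨k.val + 1, by have := k.isLt; omega⟩ = P ⟨i.val, hi⟩ k := by
    intro i hi k
    rw [hG, dif_neg (by simp), dif_pos hi]
    rfl
  have htail2 : ∀ (i : Fin (2 ^ n)) (hi : ¬ i.val < 2 ^ (n - 1)) (k : Fin (n - 1)),
      G i ⟨k.val + 1, by have := k.isLt; omega⟩
        = ! P ⟨i.val - 2 ^ (n - 1), by have := i.isLt; omega⟩ k := by
    intro i hi k
    rw [hG, dif_neg (by simp), dif_neg hi]
    rfl
  -- complementarity
  have hcompl : ∀ i : Fin (2 ^ n),
      G (i + (Fin.ofNat (2 ^ n) (2 ^ (n - 1)) : Fin (2 ^ n))) = fun j => ! (G i j) := by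
    intro i
    have hi2 := i.isLt
    rcases lt_or_ge i.val (2 ^ (n - 1)) with hi | hi
    · have hval : (i + (Fin.ofNat (2 ^ n) (2 ^ (n - 1)) : Fin (2 ^ n))).val = i.val + 2 ^ (n - 1) := by
        rw [Fin.val_add, hcast, Nat.mod_eq_of_lt (by omega)]
      funext j
      rw [hG, hG]
      by_cases hj : j.val = 0
      · rw [dif_pos hj, dif_pos hj, hval,
          decide_eq_true (by omega : 2 ^ (n-1) ≤ i.val + 2 ^ (n-1)),
          decide_eq_false (by omega : ¬ 2 ^ (n-1) ≤ i.val)]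
        rfl
      · rw [dif_neg hj, dif_neg hj, dif_pos hi,
          dif_neg (show ¬ (i + (Fin.ofNat (2 ^ n) (2 ^ (n - 1)) : Fin (2 ^ n))).val < 2 ^ (n-1) by omega)]
        simp only [hval, Nat.add_sub_cancel]
    · have hval : (i + (Fin.ofNat (2 ^ n) (2 ^ (n - 1)) : Fin (2 ^ n))).val = i.val - 2 ^ (n - 1) := by
        rw [Fin.val_add, hcast, Nat.mod_eq_sub_mod (by omega), Nat.mod_eq_of_lt (by omega)]
        omega
      funext j
      rw [hG, hG]
      by_cases hj : j.val = 0
      · rw [dif_pos hj, dif_pos hj, hval,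
          decide_eq_false (by omega : ¬ 2 ^ (n-1) ≤ i.val - 2 ^ (n-1)),
          decide_eq_true (by omega : 2 ^ (n-1) ≤ i.val)]
        rfl
      · rw [dif_neg hj, dif_neg hj, dif_neg (show ¬ i.val < 2 ^ (n-1) by omega),
          dif_pos (show (i + (Fin.ofNat (2 ^ n) (2 ^ (n - 1)) : Fin (2 ^ n))).val < 2 ^ (n-1) by omega)]
        rw [Bool.not_not]
        simp only [hval]
  -- gray condition
  have hgray : ∀ i : Fin (2 ^ n), hammingDist (G i) (G (i + 1)) = 1 := by
    intro i
    have hi2 := i.isLt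
    rw [hd_succ' hn (G i) (G (i+1))]
    by_cases hd : i.val + 1 < 2 ^ n
    · -- no wraparound
      have hval : (i + 1).val = i.val + 1 := by
        rw [Fin.val_add, hone, Nat.mod_eq_of_lt (by omega)]
      rcases lt_trichotomy (i.val + 1) (2 ^ (n - 1)) with hc | hc | hc
      · -- both in first half
        rw [hhead, hhead]
        simp only [htail1 i (by omega), htail1 (i+1) (by omega : (i+1).val < 2 ^ (n-1))]
        rw [decide_eq_false (by omega : ¬ 2 ^ (n-1) ≤ i.val),
          decide_eq_false (by omega : ¬ 2 ^ (n-1) ≤ (i+1).val), if_pos rfl]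
        simp only [hval]
        rw [Nat.zero_add]
        exact hPgray i.val hc
      · -- boundary: i.val + 1 = 2^(n-1)
        rw [hhead, hhead]
        rw [decide_eq_false (by omega : ¬ 2 ^ (n-1) ≤ i.val),
          decide_eq_true (by omega : 2 ^ (n-1) ≤ (i+1).val)]
        rw [if_neg (by simp)]
        simp only [htail1 i (by omega),
          htail2 (i+1) (by omega : ¬ (i+1).val < 2 ^ (n-1))]
        rw [show (⟨i.val, by omega⟩ : Fin (2 ^ (n-1))) = ⟨2 ^ (n-1) - 1, by omega⟩ from
            Fin.mk_eq_mk.mpr (by omega),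
          show (⟨(i+1).val - 2 ^ (n-1), by omega⟩ : Fin (2 ^ (n-1))) = ⟨0, by omega⟩ from
            Fin.mk_eq_mk.mpr (by omega),
          hPlast, hP0]
        simp [hammingDist]
      · -- both in second half
        rw [hhead, hhead]
        rw [decide_eq_true (by omega : 2 ^ (n-1) ≤ i.val),
          decide_eq_true (by omega : 2 ^ (n-1) ≤ (i+1).val), if_pos rfl]
        simp only [htail2 i (by omega), htail2 (i+1) (by omega : ¬ (i+1).val < 2 ^ (n-1))]
        rw [Nat.zero_add]
        have hnot : ∀ (x y : Fin (n-1) → Bool),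
            hammingDist (fun k => ! x k) (fun k => ! y k) = hammingDist x y :=
          fun x y => hammingDist_comp (fun _ => Bool.not)
            (fun _ a b h => by simpa using congrArg Bool.not h)
        rw [hnot]
        rw [show (⟨(i+1).val - 2 ^ (n-1), by omega⟩ : Fin (2 ^ (n-1)))
            = ⟨(i.val - 2 ^ (n-1)) + 1, by omega⟩ from Fin.mk_eq_mk.mpr (by omega)]
        exact hPgray (i.val - 2 ^ (n-1)) (by omega)
    · -- wraparound: i.val = 2^n - 1
      have hval : (i + 1).val = 0 := by
        rw [Fin.val_add, hone, show i.val + 1 = 2 ^ n by omega, Nat.mod_self]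
      rw [hhead, hhead]
      rw [decide_eq_true (by omega : 2 ^ (n-1) ≤ i.val),
        decide_eq_false (by omega : ¬ 2 ^ (n-1) ≤ (i+1).val)]
      rw [if_neg (by simp)]
      simp only [htail2 i (by omega), htail1 (i+1) (by omega : (i+1).val < 2 ^ (n-1))]
      rw [show (⟨i.val - 2 ^ (n-1), by omega⟩ : Fin (2 ^ (n-1))) = ⟨2 ^ (n-1) - 1, by omega⟩
          from Fin.mk_eq_mk.mpr (by omega),
        show (⟨(i+1).val, by omega⟩ : Fin (2 ^ (n-1))) = ⟨0, by omega⟩ from Fin.mk_eq_mk.mpr (by omega),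
        hPlast, hP0]
      simp [hammingDist]
  -- injectivity
  have hinj : Function.Injective G := by
    intro a b hab
    have h0 := congrFun hab ⟨0, by omega⟩
    rw [hhead, hhead] at h0
    have h0' : 2 ^ (n-1) ≤ a.val ↔ 2 ^ (n-1) ≤ b.val := decide_eq_decide.mp h0
    rcases lt_or_ge a.val (2 ^ (n - 1)) with ha | ha
    · have hb : b.val < 2 ^ (n - 1) := lt_of_not_ge fun h => absurd (h0'.mpr h) (not_le.mpr ha)
      have hP : P ⟨a.val, ha⟩ = P ⟨b.val, hb⟩ := by
        funext k
        have hk := congrFun hab ⟨k.val + 1, by have := k.isLt; omega⟩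
        rw [htail1 a ha, htail1 b hb] at hk
        exact hk
      exact Fin.ext (Fin.mk_eq_mk.mp (hPbij.injective hP))
    · have hb : 2 ^ (n - 1) ≤ b.val := h0'.mp ha
      have hP : P ⟨a.val - 2 ^ (n-1), by have := a.isLt; omega⟩
          = P ⟨b.val - 2 ^ (n-1), by have := b.isLt; omega⟩ := by
        funext k
        have hk := congrFun hab ⟨k.val + 1, by have := k.isLt; omega⟩
        rw [htail2 a (by omega), htail2 b (by omega)] at hk
        exact Bool.not_inj hk
      have h2 := Fin.mk_eq_mk.mp (hPbij.injective hP)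
      exact Fin.ext (by omega)
  refine ⟨(Fintype.bijective_iff_injective_and_card G).mpr ⟨hinj, ?_⟩, hgray, hcompl⟩
  simp [Fintype.card_fun]
end

section
/- For every even n ≥ 2 there exists a cyclic complementary binary Gray code on n bits: a bijection G : Fin (2^n) → (Fin n → Bool) with consecutive words (cyclically) at Hamming distance 1 and with G((i + 2^(n-1)) mod 2^n) equal to the bitwise complement of G(i) for all i. -/
/-! Auxiliary development: construction of cyclic complementary binary Gray codes. -/

def gb0 : ZMod 4 → Bool := fun t => decide (t = 1) || decide (t = 2)
def gb1 : ZMod 4 → Bool := fun t => decide (t = 2) || decide (t = 3)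

lemma gb_inj : ∀ t s : ZMod 4, gb0 t = gb0 s → gb1 t = gb1 s → t = s := by decide

lemma gb_dist_one : ∀ t s : ZMod 4, (s = t + 1 ∨ s = t - 1) →
    hammingDist ![gb0 t, gb1 t] ![gb0 s, gb1 s] = 1 := by decide

lemma gb_comp : ∀ t : ZMod 4,
    ![gb0 (t + 2), gb1 (t + 2)] = fun j => ! (![gb0 t, gb1 t] j) := by decide

lemma hammingDist_append {m p : ℕ} (u u' : Fin m → Bool) (v v' : Fin p → Bool) :
    hammingDist (Fin.append u v) (Fin.append u' v') = hammingDist u u' + hammingDist v v' := by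
  classical
  simp only [hammingDist]
  rw [Finset.card_filter, Finset.card_filter, Finset.card_filter, Fin.sum_univ_add]
  simp [Fin.append_left, Fin.append_right]

lemma bnot_append {m p : ℕ} (u : Fin m → Bool) (v : Fin p → Bool) :
    (fun j => ! (Fin.append u v j)) = Fin.append (fun j => ! u j) (fun j => ! v j) := by
  funext j
  refine Fin.addCases (fun l => ?_) (fun r => ?_) j <;>
    simp [Fin.append_left, Fin.append_right]

def IsCCGC (n : ℕ) (c : ℕ → Fin n → Bool) : Prop :=
  (∀ k, c (k + 2 ^ n) = c k) ∧
  (∀ k l, k < 2 ^ n → l < 2 ^ n → c k = c l → k = l) ∧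
  (∀ k, hammingDist (c k) (c (k + 1)) = 1) ∧
  (∀ k, c (k + 2 ^ (n - 1)) = fun j => ! (c k j))

def grayBase : ℕ → Fin 2 → Bool := fun k => ![gb0 (k : ZMod 4), gb1 (k : ZMod 4)]

lemma cast_nat_zmod4_inj {k l : ℕ} (hk : k < 4) (hl : l < 4)
    (h : (k : ZMod 4) = (l : ZMod 4)) : k = l := by
  have := congrArg ZMod.val h
  rwa [ZMod.val_cast_of_lt hk, ZMod.val_cast_of_lt hl] at this

lemma isCCGC_base : IsCCGC 2 grayBase := by
  refine ⟨fun k => ?_, fun k l hk hl h => ?_, fun k => ?_, fun k => ?_⟩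
  · have key : ∀ t : ZMod 4, (![gb0 (t + 4), gb1 (t + 4)] : Fin 2 → Bool) = ![gb0 t, gb1 t] := by
      decide
    simp only [grayBase]
    push_cast
    exact key _
  · have h0 := congrFun h 0
    have h1 := congrFun h 1
    simp only [grayBase, Matrix.cons_val_zero, Matrix.cons_val_one, Matrix.head_cons] at h0 h1
    exact cast_nat_zmod4_inj (by norm_num at hk ⊢; omega) (by norm_num at hl ⊢; omega)
      (gb_inj _ _ h0 h1)
  · have key : ∀ t : ZMod 4, hammingDist ![gb0 t, gb1 t] ![gb0 (t + 1), gb1 (t + 1)] = 1 := by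
      decide
    have := key (k : ZMod 4)
    simpa [grayBase] using this
  · have key : ∀ t : ZMod 4, ![gb0 (t + 2), gb1 (t + 2)] = fun j => ! (![gb0 t, gb1 t] j) := by
      decide
    have := key (k : ZMod 4)
    simpa [grayBase] using this

def stepRow (M k p : ℕ) : ZMod 4 :=
  if M % 4 = 2 then (k : ZMod 4) - p
  else if k % M = 0 then (p : ZMod 4) + 2 * (k / M : ℕ)
  else (k : ZMod 4) + 2 - p + 2 * (k / M : ℕ)

lemma z4 : (4 : ZMod 4) = 0 := by decide

lemma cast_mod_zmod4 {D : ℕ} (hD : 4 ∣ D) (a : ℕ) :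
    ((a % D : ℕ) : ZMod 4) = (a : ZMod 4) := by
  conv_rhs => rw [← ZMod.natCast_mod a 4]
  rw [← Nat.mod_mod_of_dvd a hD, ZMod.natCast_mod]

lemma stepRow_p (M k p : ℕ) :
    stepRow M k (p + 1) = stepRow M k p + 1 ∨ stepRow M k (p + 1) = stepRow M k p - 1 := by
  unfold stepRow
  split_ifs
  · right; push_cast; ring
  · left; push_cast; ring
  · right; push_cast; ring

lemma stepRow_injp (M k p p' : ℕ) (hp : p < 4) (hp' : p' < 4)
    (h : stepRow M k p = stepRow M k p') : p = p' := by
  unfold stepRow at h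
  split_ifs at h
  · exact cast_nat_zmod4_inj hp hp' (by linear_combination -h)
  · exact cast_nat_zmod4_inj hp hp' (by linear_combination h)
  · exact cast_nat_zmod4_inj hp hp' (by linear_combination -h)

lemma stepRow_col (M : ℕ) (hM2 : 2 ≤ M) (hM4 : M % 4 = 2 ∨ M % 4 = 0)
    (k : ℕ) (hk : k < 2 * M) :
    stepRow M ((k + 1) % (2 * M)) 0 = stepRow M k 3 := by
  have h2M : (4 : ℕ) ∣ 2 * M := by rcases hM4 with h | h <;> omega
  rcases hM4 with hM | hM
  · simp only [stepRow, if_pos hM]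
    rw [cast_mod_zmod4 h2M]
    push_cast
    linear_combination z4
  · have hMne : M % 4 ≠ 2 := by omega
    have hM4' : (4 : ℕ) ∣ M := Nat.dvd_of_mod_eq_zero hM
    have hM4le : 4 ≤ M := Nat.le_of_dvd (by omega) hM4'
    have hMz : (M : ZMod 4) = 0 := by
      rw [← ZMod.natCast_mod M 4, hM]; rfl
    simp only [stepRow, if_neg hMne]
    rcases Nat.lt_or_ge k M with hkM | hkM
    · have hk1 : (k + 1) % (2 * M) = k + 1 := Nat.mod_eq_of_lt (by omega)
      have hdiv : k / M = 0 := Nat.div_eq_of_lt hkM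
      have hmod : k % M = k := Nat.mod_eq_of_lt hkM
      rw [hk1, hdiv, hmod]
      rcases Nat.eq_zero_or_pos k with rfl | hk0
      · have e1 : (1 : ℕ) % M ≠ 0 := by rw [Nat.mod_eq_of_lt (by omega : 1 < M)]; omega
        have e2 : (1 : ℕ) / M = 0 := Nat.div_eq_of_lt (by omega)
        rw [if_neg e1, if_pos rfl, e2]
        push_cast; ring
      · rcases Nat.lt_or_ge (k + 1) M with hlt | hge
        · have e1 : (k + 1) % M ≠ 0 := by rw [Nat.mod_eq_of_lt hlt]; omega
          have e2 : (k + 1) / M = 0 := Nat.div_eq_of_lt hlt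
          have e3 : k ≠ 0 := by omega
          rw [if_neg e1, if_neg e3, e2]
          push_cast
          linear_combination z4
        · have he : k + 1 = M := by omega
          have hcast : (k : ZMod 4) + 1 = (M : ZMod 4) := by
            exact_mod_cast congrArg (Nat.cast (R := ZMod 4)) he
          have e1 : (k + 1) % M = 0 := by rw [he, Nat.mod_self]
          have e2 : (k + 1) / M = 1 := by rw [he, Nat.div_self (by omega)]
          have e3 : k ≠ 0 := by omega
          rw [if_pos e1, e2, if_neg e3]
          push_cast
          linear_combination z4 - hMz - hcast
    · obtain ⟨r, rfl⟩ : ∃ r, k = M + r := ⟨k - M, by omega⟩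
      have hr : r < M := by omega
      have ed : (M + r) / M = 1 := by
        rw [Nat.add_comm, Nat.add_div_right _ (by omega), Nat.div_eq_of_lt hr]
      have em : (M + r) % M = r := by rw [Nat.add_mod_left, Nat.mod_eq_of_lt hr]
      rcases Nat.lt_or_ge (r + 1) M with hlt | hge
      · have hk1 : (M + r + 1) % (2 * M) = M + r + 1 := Nat.mod_eq_of_lt (by omega)
        have ed1 : (M + r + 1) / M = 1 := by
          rw [show M + r + 1 = (r + 1) + M by omega, Nat.add_div_right _ (by omega),
            Nat.div_eq_of_lt hlt]
        have em1 : (M + r + 1) % M = r + 1 := by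
          rw [show M + r + 1 = M + (r + 1) by omega, Nat.add_mod_left, Nat.mod_eq_of_lt hlt]
        rcases Nat.eq_zero_or_pos r with rfl | hr0
        · have e1 : (M + 0 + 1) % M = 1 := by
            rw [show M + 0 + 1 = M + 1 by ring, Nat.add_mod_left, Nat.mod_eq_of_lt (by omega)]
          rw [hk1, if_neg (by omega : (M + 0 + 1) % M ≠ 0), if_pos (by simpa using em),
            ed1, show (M + 0) / M = 1 by simpa using ed]
          push_cast
          linear_combination hMz
        · rw [hk1, if_neg (by omega : (M + r + 1) % M ≠ 0),
            if_neg (by omega : (M + r) % M ≠ 0), ed1, ed]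
          push_cast
          linear_combination z4
      · have he : r + 1 = M := by omega
        have hcast : (r : ZMod 4) + 1 = (M : ZMod 4) := by
          exact_mod_cast congrArg (Nat.cast (R := ZMod 4)) he
        have hw : (M + r + 1) % (2 * M) = 0 := by
          rw [show M + r + 1 = 2 * M by omega, Nat.mod_self]
        rw [hw, if_pos (Nat.zero_mod M), if_neg (by omega : (M + r) % M ≠ 0),
          Nat.zero_div, ed]
        push_cast
        linear_combination -hcast - 2 * hMz

lemma stepRow_comp (M : ℕ) (hM2 : 2 ≤ M) (hM4 : M % 4 = 2 ∨ M % 4 = 0)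
    (k : ℕ) (hk : k < 2 * M) (p : ℕ) :
    stepRow M ((k + M) % (2 * M)) p = stepRow M k p + 2 := by
  have h2M : (4 : ℕ) ∣ 2 * M := by rcases hM4 with h | h <;> omega
  rcases hM4 with hM | hM
  · have hMc : (M : ZMod 4) = 2 := by
      rw [← ZMod.natCast_mod M 4, hM]; rfl
    simp only [stepRow, if_pos hM]
    rw [cast_mod_zmod4 h2M]
    push_cast
    linear_combination hMc
  · have hMne : M % 4 ≠ 2 := by omega
    have hM4' : (4 : ℕ) ∣ M := Nat.dvd_of_mod_eq_zero hM
    have hMz : (M : ZMod 4) = 0 := by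
      rw [← ZMod.natCast_mod M 4, hM]; rfl
    simp only [stepRow, if_neg hMne]
    rcases Nat.lt_or_ge k M with hkM | hkM
    · have hk1 : (k + M) % (2 * M) = k + M := Nat.mod_eq_of_lt (by omega)
      have ed : (k + M) / M = 1 := by
        rw [Nat.add_div_right _ (by omega), Nat.div_eq_of_lt hkM]
      have em : (k + M) % M = k := by rw [Nat.add_mod_right, Nat.mod_eq_of_lt hkM]
      have hdiv : k / M = 0 := Nat.div_eq_of_lt hkM
      have hmod : k % M = k := Nat.mod_eq_of_lt hkM
      rw [hk1, ed, em, hdiv, hmod]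
      rcases Nat.eq_zero_or_pos k with rfl | hk0
      · rw [if_pos rfl, if_pos rfl]
        push_cast; ring
      · rw [if_neg (by omega), if_neg (by omega)]
        push_cast
        linear_combination hMz
    · obtain ⟨r, rfl⟩ : ∃ r, k = M + r := ⟨k - M, by omega⟩
      have hr : r < M := by omega
      have hw : (M + r + M) % (2 * M) = r := by
        rw [show M + r + M = r + 2 * M by omega, Nat.add_mod_right, Nat.mod_eq_of_lt (by omega)]
      have ed : (M + r) / M = 1 := by
        rw [Nat.add_comm, Nat.add_div_right _ (by omega), Nat.div_eq_of_lt hr]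
      have em : (M + r) % M = r := by rw [Nat.add_mod_left, Nat.mod_eq_of_lt hr]
      have hrd : r / M = 0 := Nat.div_eq_of_lt hr
      have hrm : r % M = r := Nat.mod_eq_of_lt hr
      rw [hw, ed, em, hrd, hrm]
      rcases Nat.eq_zero_or_pos r with rfl | hr0
      · rw [if_pos rfl, if_pos rfl]
        push_cast
        linear_combination -z4
      · rw [if_neg (by omega), if_neg (by omega)]
        push_cast
        linear_combination -hMz - z4

def stepC (n : ℕ) (c : ℕ → Fin n → Bool) (i : ℕ) : Fin (n + 2) → Bool :=
  Fin.append (c (i / 4))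
    ![gb0 (stepRow (2 ^ (n - 1)) ((i / 4) % 2 ^ n) (i % 4)),
      gb1 (stepRow (2 ^ (n - 1)) ((i / 4) % 2 ^ n) (i % 4))]

lemma isCCGC_step (n : ℕ) (hn : 2 ≤ n) (c : ℕ → Fin n → Bool) (hc : IsCCGC n c) :
    IsCCGC (n + 2) (stepC n c) := by
  obtain ⟨hper, hinj, hgray, hcomp⟩ := hc
  have hNM : (2 : ℕ) ^ n = 2 * 2 ^ (n - 1) := by
    rw [← pow_succ']
    congr 1
    omega
  have hM2 : 2 ≤ 2 ^ (n - 1) := by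
    calc (2:ℕ) = 2 ^ 1 := rfl
    _ ≤ 2 ^ (n - 1) := Nat.pow_le_pow_right (by omega) (by omega)
  have hM4 : 2 ^ (n - 1) % 4 = 2 ∨ 2 ^ (n - 1) % 4 = 0 := by
    rcases Nat.lt_or_ge n 3 with h | h
    · left
      have : n - 1 = 1 := by omega
      rw [this]
      rfl
    · right
      have : (2:ℕ) ^ (n - 1) = 4 * 2 ^ (n - 3) := by
        rw [show (4:ℕ) = 2 ^ 2 by norm_num, ← pow_add]
        congr 1
        omega
      rw [this]
      exact Nat.mul_mod_right 4 _
  have hN4 : (2 : ℕ) ^ (n + 2) = 4 * 2 ^ n := by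
    rw [pow_add]; ring
  have hN2 : (2 : ℕ) ^ (n + 1) = 4 * 2 ^ (n - 1) := by
    rw [show n + 1 = (n - 1) + 2 by omega, pow_add]; ring
  set M := (2 : ℕ) ^ (n - 1) with hMdef
  set N := (2 : ℕ) ^ n with hNdef
  have hmodN : ∀ k, c (k % N) = c k := by
    have hmul : ∀ m k, c (k + N * m) = c k := by
      intro m
      induction m with
      | zero => intro k; simp
      | succ j ih =>
        intro k
        rw [show k + N * (j + 1) = (k + N * j) + N by ring, hper, ih]
    intro k
    conv_rhs => rw [← Nat.mod_add_div k N]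
    exact (hmul _ _).symm
  refine ⟨fun i => ?_, fun i i' hi hi' h => ?_, fun i => ?_, fun i => ?_⟩
  · have e1 : (i + 2 ^ (n + 2)) / 4 = i / 4 + N := by rw [hN4]; omega
    have e2 : (i + 2 ^ (n + 2)) % 4 = i % 4 := by rw [hN4]; omega
    simp only [stepC, e1, e2, ← hNdef, Nat.add_mod_right, hper]
  · have hq : i / 4 < N := by rw [hN4] at hi; omega
    have hq' : i' / 4 < N := by rw [hN4] at hi'; omega
    have hA : c (i / 4) = c (i' / 4) := by
      funext j
      have := congrFun h (Fin.castAdd 2 j)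
      simpa only [stepC, Fin.append_left] using this
    have hqq : i / 4 = i' / 4 := hinj _ _ hq hq' hA
    have h0 := congrFun h (Fin.natAdd n 0)
    have h1 := congrFun h (Fin.natAdd n 1)
    simp only [stepC, Fin.append_right, Matrix.cons_val_zero, Matrix.cons_val_one,
      Matrix.head_cons] at h0 h1
    have ht := gb_inj _ _ h0 h1
    have hp : i % 4 = i' % 4 := by
      refine stepRow_injp M ((i / 4) % N) _ _ (by omega) (by omega) ?_
      rw [ht, hqq]
    omega
  · rcases Nat.lt_or_ge (i % 4) 3 with hp | hp
    · have e1 : (i + 1) / 4 = i / 4 := by omega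
      have e2 : (i + 1) % 4 = i % 4 + 1 := by omega
      simp only [stepC, e1, e2]
      rw [hammingDist_append, hammingDist_self,
        gb_dist_one _ _ (stepRow_p M ((i / 4) % N) (i % 4))]
    · have hp3 : i % 4 = 3 := by omega
      have e1 : (i + 1) / 4 = i / 4 + 1 := by omega
      have e2 : (i + 1) % 4 = 0 := by omega
      have e3 : (i / 4 + 1) % N = ((i / 4) % N + 1) % (2 * M) := by
        rw [← hNM, Nat.add_mod (i / 4) 1 N, Nat.mod_eq_of_lt (by omega : 1 < N)]
      simp only [stepC, e1, e2, hp3, ← hMdef, ← hNdef, e3]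
      rw [stepRow_col M hM2 hM4 _ (by rw [← hNM]; exact Nat.mod_lt _ (by omega)),
        hammingDist_append, hammingDist_self, hgray]
  · have e1 : (i + 2 ^ (n + 2 - 1)) / 4 = i / 4 + M := by
      rw [show n + 2 - 1 = n + 1 by omega, hN2]; omega
    have e2 : (i + 2 ^ (n + 2 - 1)) % 4 = i % 4 := by
      rw [show n + 2 - 1 = n + 1 by omega, hN2]; omega
    have e3 : (i / 4 + M) % N = ((i / 4) % N + M) % (2 * M) := by
      rw [← hNM, Nat.add_mod (i / 4) M N, Nat.mod_eq_of_lt (by omega : M < N)]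
    simp only [stepC, e1, e2, ← hMdef, ← hNdef, e3]
    rw [stepRow_comp M hM2 hM4 _ (by rw [← hNM]; exact Nat.mod_lt _ (by omega)),
      hcomp, gb_comp, bnot_append]

lemma exists_isCCGC (n : ℕ) (hn : 2 ≤ n) (heven : Even n) : ∃ c, IsCCGC n c := by
  obtain ⟨t, ht⟩ := heven
  have h : ∀ m : ℕ, ∃ c, IsCCGC (2 + 2 * m) c := by
    intro m
    induction m with
    | zero => exact ⟨grayBase, isCCGC_base⟩
    | succ j ih =>
      obtain ⟨c, hc⟩ := ih
      rw [show 2 + 2 * (j + 1) = (2 + 2 * j) + 2 by ring]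
      exact ⟨_, isCCGC_step _ (by omega) c hc⟩
  have := h (t - 1)
  rwa [show 2 + 2 * (t - 1) = n by omega] at this

open Fin.NatCast

/-- for every even `n ≥ 2` there is a cyclic complementary binary Gray code. -/
theorem exists_complementary_binary_gray_code_of_even (n : ℕ) (hn : 2 ≤ n) (heven : Even n) :
    ∃ G : Fin (2 ^ n) → (Fin n → Bool),
      Function.Bijective G ∧
      (∀ i : Fin (2 ^ n), hammingDist (G i) (G (i + 1)) = 1) ∧
      (∀ i : Fin (2 ^ n),
        G (i + ((2 ^ (n - 1) : ℕ) : Fin (2 ^ n))) = fun j => ! (G i j)) := by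
  obtain ⟨c, hper, hinj, hgray, hcomp⟩ := exists_isCCGC n hn heven
  haveI : NeZero (2 ^ n) := ⟨by positivity⟩
  have h2n : 4 ≤ 2 ^ n := by
    calc (4:ℕ) = 2 ^ 2 := rfl
    _ ≤ 2 ^ n := Nat.pow_le_pow_right (by omega) hn
  have hmodN : ∀ k, c (k % 2 ^ n) = c k := by
    have hmul : ∀ m k, c (k + 2 ^ n * m) = c k := by
      intro m
      induction m with
      | zero => intro k; simp
      | succ j ih =>
        intro k
        rw [show k + 2 ^ n * (j + 1) = (k + 2 ^ n * j) + 2 ^ n by ring, hper, ih]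
    intro k
    conv_rhs => rw [← Nat.mod_add_div k (2 ^ n)]
    exact (hmul _ _).symm
  refine ⟨fun i => c i.val, ?_, ?_, ?_⟩
  · rw [Fintype.bijective_iff_injective_and_card]
    refine ⟨fun i j h => Fin.ext (hinj _ _ i.isLt j.isLt h), ?_⟩
    simp [Fintype.card_fun]
  · intro i
    have hval : ((i + 1 : Fin (2 ^ n)) : ℕ) = (i.val + 1) % 2 ^ n := by
      rw [Fin.add_def]
      simp only [Fin.val_one']
      rw [Nat.mod_eq_of_lt (by omega : 1 < 2 ^ n)]
    show hammingDist (c i.val) (c ((i + 1 : Fin (2 ^ n)) : ℕ)) = 1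
    rw [hval, hmodN]
    exact hgray i.val
  · intro i
    have hlt : 2 ^ (n - 1) < 2 ^ n := Nat.pow_lt_pow_right (by omega) (by omega)
    have hval : ((i + ((2 ^ (n - 1) : ℕ) : Fin (2 ^ n)) : Fin (2 ^ n)) : ℕ)
        = (i.val + 2 ^ (n - 1)) % 2 ^ n := by
      rw [Fin.add_def]
      simp only [Fin.val_natCast]
      rw [Nat.mod_eq_of_lt hlt]
    show c ((i + ((2 ^ (n - 1) : ℕ) : Fin (2 ^ n)) : Fin (2 ^ n)) : ℕ) = fun j => ! c i.val j
    rw [hval, hmodN]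
    exact hcomp i.val
end

section
/- For every odd n ≥ 3 there exists a bijective listing G : Fin (2^n - 2) → S of the set S of all binary n-tuples except the all-zeros and all-ones tuples, such that consecutive words (cyclically) have Hamming distance 1 and the word at position (i + 2^(n-1) - 1) mod (2^n - 2) is the bitwise complement of the word at position i, for all i. -/
namespace GrayAux

open Finset

/-- Hamming distance of `Fin.cons`. -/
lemma dist_cons {m : ℕ} (a b : Bool) (u v : Fin m → Bool) :
    hammingDist (Fin.cons a u : Fin (m+1) → Bool) (Fin.cons b v) =
      (if a = b then 0 else 1) + hammingDist u v := by
  simp only [hammingDist, Finset.card_filter, Fin.sum_univ_succ, Fin.cons_zero, Fin.cons_succ]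
  by_cases h : a = b <;> simp [h]

lemma cons_eq_cons {m : ℕ} {a b : Bool} {u v : Fin m → Bool} :
    (Fin.cons a u : Fin (m+1) → Bool) = Fin.cons b v ↔ a = b ∧ u = v :=
  Fin.cons_injective2.eq_iff

lemma dist_comp {n : ℕ} (e : Fin n ≃ Fin n) (x y : Fin n → Bool) :
    hammingDist (x ∘ e) (y ∘ e) = hammingDist x y := by
  simp only [hammingDist, Finset.card_filter]
  exact Equiv.sum_comp e (fun i => if x i ≠ y i then 1 else 0)

lemma dist_compl_right {n : ℕ} (a b : Fin n → Bool) :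
    hammingDist a (fun j => !(b j)) = n - hammingDist a b := by
  have h1 : (Finset.univ.filter fun i => a i ≠ !(b i)) =
      (Finset.univ.filter fun i => a i ≠ b i)ᶜ := by
    ext i
    simp only [Finset.mem_filter, Finset.mem_compl, Finset.mem_univ, true_and]
    cases a i <;> cases b i <;> simp
  simp only [hammingDist, h1, Finset.card_compl, Fintype.card_fin]

lemma dist_compl_compl {n : ℕ} (a b : Fin n → Bool) :
    hammingDist (fun j => !(a j)) (fun j => !(b j)) = hammingDist a b := by
  simp only [hammingDist]
  congr 1
  ext i
  simp only [Finset.mem_filter, Finset.mem_univ, true_and]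
  cases a i <;> cases b i <;> simp

lemma dist_triangle_mod2 {n : ℕ} (a b c : Fin n → Bool) :
    (hammingDist a b + hammingDist b c) % 2 = hammingDist a c % 2 := by
  have key : ((hammingDist a b + hammingDist b c : ℕ) : ZMod 2)
      = ((hammingDist a c : ℕ) : ZMod 2) := by
    push_cast
    simp only [hammingDist, Finset.card_filter]
    push_cast
    rw [← Finset.sum_add_distrib]
    apply Finset.sum_congr rfl
    intro i _
    cases a i <;> cases b i <;> cases c i <;> decide
  exact (ZMod.natCast_eq_natCast_iff _ _ _).mp key

lemma dist_le {n : ℕ} (a b : Fin n → Bool) : hammingDist a b ≤ n := by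
  simpa using hammingDist_le_card_fintype (x := a) (y := b)

/-- `L` is a Hamiltonian path from `u` to `v` on the set `S` in the Hamming graph. -/
def IsHP {n : ℕ} (S : (Fin n → Bool) → Prop) (u v : Fin n → Bool)
    (L : List (Fin n → Bool)) : Prop :=
  L.head? = some u ∧ L.getLast? = some v ∧ L.Nodup ∧ (∀ w, w ∈ L ↔ S w) ∧
  L.Chain' (fun a b => hammingDist a b = 1)

lemma IsHP.ne_nil {n : ℕ} {S : (Fin n → Bool) → Prop} {u v L} (h : IsHP S u v L) :
    L ≠ [] := by
  intro hL; rw [hL] at h; simp [IsHP] at h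

lemma IsHP.congr {n : ℕ} {S T : (Fin n → Bool) → Prop} {u v L} (h : IsHP S u v L)
    (hST : ∀ w, S w ↔ T w) : IsHP T u v L :=
  ⟨h.1, h.2.1, h.2.2.1, fun w => (h.2.2.2.1 w).trans (hST w), h.2.2.2.2⟩

lemma IsHP.reverse {n : ℕ} {S : (Fin n → Bool) → Prop} {u v L} (h : IsHP S u v L) :
    IsHP S v u L.reverse := by
  obtain ⟨h1, h2, h3, h4, h5⟩ := h
  refine ⟨?_, ?_, List.nodup_reverse.mpr h3, fun w => by simpa using h4 w, ?_⟩
  · rw [List.head?_reverse]; exact h2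
  · rw [List.getLast?_reverse]; exact h1
  · unfold List.Chain' at *; rw [List.isChain_reverse]
    exact h5.imp (fun a b hab => by show hammingDist b a = 1; rwa [hammingDist_comm])

lemma IsHP.map {n m : ℕ} {S : (Fin n → Bool) → Prop} {u v L} (h : IsHP S u v L)
    (φ : (Fin n → Bool) → (Fin m → Bool)) (hinj : Function.Injective φ)
    (hdist : ∀ a b, hammingDist (φ a) (φ b) = hammingDist a b) :
    IsHP (fun w => ∃ x, S x ∧ φ x = w) (φ u) (φ v) (L.map φ) := by
  obtain ⟨h1, h2, h3, h4, h5⟩ := h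
  refine ⟨?_, ?_, h3.map hinj, ?_, ?_⟩
  · rw [List.head?_map, h1]; rfl
  · rw [List.getLast?_map, h2]; rfl
  · intro w
    simp only [List.mem_map]
    constructor
    · rintro ⟨x, hx, rfl⟩; exact ⟨x, (h4 x).mp hx, rfl⟩
    · rintro ⟨x, hx, rfl⟩; exact ⟨x, (h4 x).mpr hx, rfl⟩
  · unfold List.Chain' at *; rw [List.isChain_map]
    exact h5.imp (fun a b hab => by rw [hdist]; exact hab)

lemma IsHP.append {n : ℕ} {S T : (Fin n → Bool) → Prop} {u a b v L1 L2}
    (h1 : IsHP S u a L1) (h2 : IsHP T b v L2)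
    (hab : hammingDist a b = 1) (hdisj : ∀ w, ¬ (S w ∧ T w)) :
    IsHP (fun w => S w ∨ T w) u v (L1 ++ L2) := by
  obtain ⟨h11, h12, h13, h14, h15⟩ := h1
  obtain ⟨h21, h22, h23, h24, h25⟩ := h2
  refine ⟨?_, ?_, ?_, ?_, ?_⟩
  · rw [List.head?_append_of_ne_nil _ (by rintro rfl; simp at h11)]; exact h11
  · rw [List.getLast?_append_of_ne_nil L1 (by rintro rfl; simp at h21)]; exact h22
  · rw [List.nodup_append']
    refine ⟨h13, h23, fun w hw hw' => ?_⟩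
    exact hdisj w ⟨(h14 w).mp hw, (h24 w).mp hw'⟩
  · intro w
    simp only [List.mem_append, h14 w, h24 w]
  · unfold List.Chain' at *; rw [List.isChain_append]
    refine ⟨h15, h25, ?_⟩
    intro x hx y hy
    rw [h12] at hx; rw [h21] at hy
    simp only [Option.mem_some_iff] at hx hy
    subst hx; subst hy
    exact hab

/-- transport along precomposition with a permutation of coordinates -/
lemma IsHP.reindex {n : ℕ} {S : (Fin n → Bool) → Prop} {u v L} (h : IsHP S u v L)
    (e : Fin n ≃ Fin n) :
    IsHP (fun w => S (w ∘ e.symm)) (u ∘ e) (v ∘ e) (L.map (· ∘ ⇑e)) := by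
  have hinj : Function.Injective (fun x : Fin n → Bool => x ∘ ⇑e) := by
    intro x y hxy
    funext i
    have := congrFun hxy (e.symm i)
    simpa using this
  have := h.map (fun x => x ∘ ⇑e) hinj (fun a b => dist_comp e a b)
  refine this.congr ?_
  intro w
  constructor
  · rintro ⟨x, hx, rfl⟩
    simpa [Function.comp_assoc] using hx
  · intro hw
    exact ⟨w ∘ ⇑e.symm, hw, funext fun i => by simp⟩

lemma parity_ne {n : ℕ} {a b : Fin n → Bool} (h : Odd (hammingDist a b)) : a ≠ b := by
  rintro rfl
  simp [hammingDist_self] at h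

lemma dist_update {m : ℕ} (x : Fin m → Bool) (j : Fin m) :
    hammingDist x (Function.update x j (!(x j))) = 1 := by
  have h : (Finset.univ.filter fun i => x i ≠ Function.update x j (!(x j)) i) = {j} := by
    ext i
    simp only [Finset.mem_filter, Finset.mem_univ, true_and, Finset.mem_singleton]
    rcases eq_or_ne i j with rfl | h
    · simp
    · simp [Function.update_of_ne h, h]
  simp [hammingDist, h]

lemma cons_inj (m : ℕ) (b : Bool) :
    Function.Injective (fun x : Fin m → Bool => (Fin.cons b x : Fin (m+1) → Bool)) :=
  fun x y hxy => (cons_eq_cons.mp hxy).2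

lemma cons_dist (m : ℕ) (b : Bool) (x y : Fin m → Bool) :
    hammingDist (Fin.cons b x : Fin (m+1) → Bool) (Fin.cons b y) = hammingDist x y := by
  rw [dist_cons]; simp

/-- Havel's theorem: Hamiltonian path in the hypercube between any two vertices at odd distance. -/
theorem H1 : ∀ (n : ℕ) (u v : Fin n → Bool), Odd (hammingDist u v) →
    ∃ L, IsHP (fun _ => True) u v L := by
  intro n
  induction n with
  | zero =>
    intro u v h
    rw [funext (fun i : Fin 0 => i.elim0 : ∀ i : Fin 0, u i = v i)] at h
    simp [hammingDist_self] at h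
  | succ m ih =>
    have core : ∀ u v : Fin (m+1) → Bool, u 0 = false → v 0 = true →
        Odd (hammingDist u v) → ∃ L, IsHP (fun _ => True) u v L := by
      intro u v hu0 hv0 hodd
      rcases Nat.eq_zero_or_pos m with hm | hm
      · subst hm
        refine ⟨[u, v], rfl, rfl, ?_, ?_, ?_⟩
        · refine List.nodup_cons.mpr ⟨?_, List.nodup_singleton v⟩
          simp only [List.mem_singleton]
          intro he
          have : u 0 = v 0 := by rw [he]
          rw [hu0, hv0] at this
          exact Bool.noConfusion this
        · intro w
          simp only [List.mem_cons, List.mem_singleton, List.not_mem_nil, or_false, iff_true]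
          cases h0 : w 0 with
          | false =>
            left; funext i
            have hi : i = 0 := Fin.ext (by omega)
            rw [hi, h0, hu0]
          | true =>
            right; funext i
            have hi : i = 0 := Fin.ext (by omega)
            rw [hi, h0, hv0]
        · simp only [List.Chain', List.isChain_cons_cons, List.isChain_singleton, and_true]
          have h2 := dist_le u v
          rw [Nat.odd_iff] at hodd
          omega
      · -- m ≥ 1
        have hcu : (Fin.cons false (Fin.tail u) : Fin (m+1) → Bool) = u := by
          rw [← hu0]; exact Fin.cons_self_tail u
        have hcv : (Fin.cons true (Fin.tail v) : Fin (m+1) → Bool) = v := by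
          rw [← hv0]; exact Fin.cons_self_tail v
        set u' := Fin.tail u with hu'
        set v' := Fin.tail v with hv'
        have hduv : hammingDist u v = 1 + hammingDist u' v' := by
          rw [← hcu, ← hcv, dist_cons]; simp
        set j : Fin m := ⟨0, hm⟩
        set w := Function.update v' j (!(v' j)) with hwdef
        have hv'w : hammingDist v' w = 1 := dist_update v' j
        have hu'w : Odd (hammingDist u' w) := by
          have ht := dist_triangle_mod2 u' v' w
          rw [hduv, Nat.odd_iff] at hodd
          rw [Nat.odd_iff]
          omega
        have hwv : Odd (hammingDist w v') := by
          rw [hammingDist_comm, hv'w]; exact odd_one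
        obtain ⟨P1, hP1⟩ := ih u' w hu'w
        obtain ⟨P2, hP2⟩ := ih w v' hwv
        have h1 := hP1.map _ (cons_inj m false) (cons_dist m false)
        have h2 := hP2.map _ (cons_inj m true) (cons_dist m true)
        have hjun : hammingDist (Fin.cons false w : Fin (m+1) → Bool) (Fin.cons true w) = 1 := by
          rw [dist_cons]; simp [hammingDist_self]
        have hdisj : ∀ x : Fin (m+1) → Bool,
            ¬ ((∃ y, True ∧ (Fin.cons false y : Fin (m+1) → Bool) = x) ∧
               (∃ z, True ∧ (Fin.cons true z : Fin (m+1) → Bool) = x)) := by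
          rintro x ⟨⟨y, -, hy⟩, ⟨z, -, hz⟩⟩
          rw [← hz] at hy
          exact Bool.noConfusion (cons_eq_cons.mp hy).1
        have happ := (h1.append h2 hjun hdisj).congr (T := fun _ => True) ?_
        · rw [← hcu, ← hcv]
          exact ⟨_, happ⟩
        · intro x
          simp only [iff_true]
          cases h0 : x 0 with
          | false =>
            left
            exact ⟨Fin.tail x, trivial, by rw [← h0]; exact Fin.cons_self_tail x⟩
          | true =>
            right
            exact ⟨Fin.tail x, trivial, by rw [← h0]; exact Fin.cons_self_tail x⟩
    intro u v hodd
    have hne : u ≠ v := parity_ne hodd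
    obtain ⟨c, hc⟩ := Function.ne_iff.mp hne
    set e := Equiv.swap (0 : Fin (m+1)) c with he
    have hee : ∀ x : Fin (m+1) → Bool, (x ∘ ⇑e) ∘ ⇑e = x := by
      intro x; funext i; simp [he, Equiv.swap_apply_self]
    have h0 : (u ∘ ⇑e) 0 ≠ (v ∘ ⇑e) 0 := by
      simpa [he, Equiv.swap_apply_left] using hc
    have hodd' : Odd (hammingDist (u ∘ ⇑e) (v ∘ ⇑e)) := by rwa [dist_comp]
    have hfin : ∀ L, IsHP (fun _ => True) (u ∘ ⇑e) (v ∘ ⇑e) L →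
        ∃ L', IsHP (fun _ => True) u v L' := by
      intro L hL
      have h' := hL.reindex e
      rw [hee u, hee v] at h'
      exact ⟨_, h'⟩
    cases hf : (u ∘ ⇑e) 0 with
    | false =>
      have hv0 : (v ∘ ⇑e) 0 = true := by
        cases hb : (v ∘ ⇑e) 0 with
        | false => exact absurd (hf.trans hb.symm) h0
        | true => rfl
      obtain ⟨L, hL⟩ := core (u ∘ ⇑e) (v ∘ ⇑e) hf hv0 hodd'
      exact hfin L hL
    | true =>
      have hv0 : (v ∘ ⇑e) 0 = false := by
        cases hb : (v ∘ ⇑e) 0 with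
        | true => exact absurd (hf.trans hb.symm) h0
        | false => rfl
      obtain ⟨L, hL⟩ := core (v ∘ ⇑e) (u ∘ ⇑e) hv0 hf
        (by rwa [hammingDist_comm] at hodd')
      exact hfin L.reverse hL.reverse

lemma comp_comp {n : ℕ} (e : Fin n ≃ Fin n) (he : e.symm = e) (x : Fin n → Bool) :
    (x ∘ ⇑e) ∘ ⇑e = x := by
  funext i
  have h1 : e (e i) = e.symm (e i) := by rw [he]
  have h2 : e.symm (e i) = i := e.symm_apply_apply i
  show x (e (e i)) = x i
  rw [h1, h2]

lemma IsHP.unreindex {n : ℕ} (e : Fin n ≃ Fin n) (he : e.symm = e)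
    {f u v : Fin n → Bool} {L}
    (h : IsHP (fun w => w ≠ f ∘ ⇑e) (u ∘ ⇑e) (v ∘ ⇑e) L) :
    IsHP (fun w => w ≠ f) u v (L.map (· ∘ ⇑e)) := by
  have h' := h.reindex e
  rw [comp_comp e he u, comp_comp e he v, he] at h'
  refine h'.congr ?_
  intro w
  constructor
  · intro hw hwf
    exact hw (by rw [hwf])
  · intro hw hwf
    apply hw
    have := congrArg (fun x => x ∘ ⇑e) hwf
    simpa [comp_comp e he] using this

lemma IsHP.unreindex_true {n : ℕ} (e : Fin n ≃ Fin n) (he : e.symm = e)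
    {u v : Fin n → Bool} {L}
    (h : IsHP (fun _ => True) (u ∘ ⇑e) (v ∘ ⇑e) L) :
    IsHP (fun _ => True) u v (L.map (· ∘ ⇑e)) := by
  have h' := h.reindex e
  rw [comp_comp e he u, comp_comp e he v] at h'
  exact h'.congr (fun w => Iff.rfl)

/-- Hyper-Hamiltonian laceability: Hamiltonian path of the hypercube minus one vertex. -/
theorem H2 : ∀ (n : ℕ) (f u v : Fin n → Bool), u ≠ v →
    Odd (hammingDist u f) → Odd (hammingDist v f) →
    ∃ L, IsHP (fun w => w ≠ f) u v L := by
  intro n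
  induction n with
  | zero =>
    intro f u v huv _ _
    exact absurd (funext fun i => i.elim0) huv
  | succ m ih =>
    rcases Nat.lt_or_ge m 2 with hm | hm
    · -- base cases n = 1, 2
      intro f u v huv hu hv
      have huf : u ≠ f := parity_ne hu
      have hvf : v ≠ f := parity_ne hv
      interval_cases m
      · -- n = 1 : impossible
        exfalso
        have e1 : u 0 ≠ v 0 := fun h => huv (funext fun i => by
          have hi : i = 0 := Fin.ext (by omega); rw [hi]; exact h)
        have e2 : u 0 ≠ f 0 := fun h => huf (funext fun i => by
          have hi : i = 0 := Fin.ext (by omega); rw [hi]; exact h)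
        have e3 : v 0 ≠ f 0 := fun h => hvf (funext fun i => by
          have hi : i = 0 := Fin.ext (by omega); rw [hi]; exact h)
        cases hu0 : u 0 <;> cases hv0 : v 0 <;> cases hf0 : f 0 <;> simp_all
      · -- n = 2
        set nf : Fin 2 → Bool := fun j => !(f j) with hnf
        have hduf : hammingDist u f = 1 := by
          have h2 := dist_le u f
          rw [Nat.odd_iff] at hu
          omega
        have hdvf : hammingDist v f = 1 := by
          have h2 := dist_le v f
          rw [Nat.odd_iff] at hv
          omega
        have hunf : hammingDist u nf = 1 := by
          rw [hnf, dist_compl_right, hduf]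
        have hvnf : hammingDist v nf = 1 := by
          rw [hnf, dist_compl_right, hdvf]
        have hfnf : hammingDist f nf = 2 := by
          rw [hnf, dist_compl_right, hammingDist_self]
        have hune : u ≠ nf := fun h => by rw [h, hammingDist_self] at hunf; exact one_ne_zero hunf.symm
        have hvne : v ≠ nf := fun h => by rw [h, hammingDist_self] at hvnf; exact one_ne_zero hvnf.symm
        have hfne : nf ≠ f := fun h => by rw [← h, hammingDist_comm] at hfnf; rw [hammingDist_self] at hfnf; omega
        refine ⟨[u, nf, v], rfl, rfl, ?_, ?_, ?_⟩
        · have hsym : nf ≠ v := fun h => hvne h.symm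
          simp only [List.nodup_cons, List.mem_cons, List.mem_singleton,
            List.not_mem_nil, or_false, not_or, List.nodup_nil, and_true,
            List.nodup_singleton]
          tauto
        · intro w
          simp only [List.mem_cons, List.mem_singleton, List.not_mem_nil, or_false]
          constructor
          · rintro (rfl | rfl | rfl)
            · exact huf
            · exact hfne
            · exact hvf
          · intro hwf
            by_contra hcon
            push_neg at hcon
            obtain ⟨c1, c2, c3⟩ := hcon
            have hsym : nf ≠ v := fun h => hvne h.symm
            have hnodup : ([w, u, nf, v, f] : List (Fin 2 → Bool)).Nodup := by
              simp only [List.nodup_cons, List.mem_cons, List.mem_singleton,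
                List.not_mem_nil, or_false, not_or, List.nodup_nil, and_true,
                List.nodup_singleton]
              tauto
            have hle := hnodup.length_le_card
            have hcard : Fintype.card (Fin 2 → Bool) = 4 := by
              rw [Fintype.card_fun]
              norm_num
            rw [hcard] at hle
            simp at hle
        · simp only [List.Chain', List.isChain_cons_cons, List.isChain_singleton, and_true]
          exact ⟨hunf, by rw [hammingDist_comm]; exact hvnf⟩
    · -- inductive step, m ≥ 2
      have core : ∀ f u v : Fin (m+1) → Bool, u 0 ≠ v 0 → f 0 = u 0 →
          Odd (hammingDist u f) → Odd (hammingDist v f) →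
          ∃ L, IsHP (fun w => w ≠ f) u v L := by
        intro f u v h0' hf0' hu hv
        obtain ⟨a, ha⟩ : ∃ a, u 0 = a := ⟨u 0, rfl⟩
        have h0 : a ≠ v 0 := ha ▸ h0'
        have hf0 : f 0 = a := hf0'.trans ha
        set ut := Fin.tail u with hut
        set vt := Fin.tail v with hvt
        set ft := Fin.tail f with hft
        have hcu : (Fin.cons a ut : Fin (m+1) → Bool) = u := by
          rw [← ha]; exact Fin.cons_self_tail u
        have hcf : (Fin.cons a ft : Fin (m+1) → Bool) = f := by
          rw [← hf0]; exact Fin.cons_self_tail f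
        have hv0 : v 0 = !a := Bool.eq_not_iff.mpr (fun h => h0 h.symm)
        have hcv : (Fin.cons (!a) vt : Fin (m+1) → Bool) = v := by
          rw [← hv0]; exact Fin.cons_self_tail v
        have hduf : hammingDist u f = hammingDist ut ft := by
          rw [← hcu, ← hcf, dist_cons]; simp
        have hdvf : hammingDist v f = 1 + hammingDist vt ft := by
          rw [← hcv, ← hcf, dist_cons]; simp
        -- w : flip coords 0, 1 of ut
        set w : Fin m → Bool := fun i => if (i : ℕ) < 2 then !(ut i) else ut i with hwdef
        have hfilter : (Finset.univ.filter fun i => ut i ≠ w i) =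
            ({⟨0, by omega⟩, ⟨1, by omega⟩} : Finset (Fin m)) := by
          ext i
          simp only [Finset.mem_filter, Finset.mem_univ, true_and, Finset.mem_insert,
            Finset.mem_singleton, Fin.ext_iff]
          constructor
          · intro hi
            by_contra hcon
            push_neg at hcon
            have h2 : ¬ ((i:ℕ) < 2) := by omega
            rw [hwdef] at hi
            simp only [h2, if_false] at hi
            exact hi rfl
          · intro hi
            have h2 : (i:ℕ) < 2 := by omega
            rw [hwdef]
            simp only [h2, if_true]
            cases ut i <;> simp
        have hdw : hammingDist ut w = 2 := by
          rw [hammingDist, hfilter]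
          rw [Finset.card_insert_of_notMem (by simp [Fin.ext_iff]), Finset.card_singleton]
        have hwne : ut ≠ w := fun h => by rw [h, hammingDist_self] at hdw; omega
        have hoddutft : Odd (hammingDist ut ft) := by rwa [hduf] at hu
        have hoddwft : Odd (hammingDist w ft) := by
          have ht := dist_triangle_mod2 w ut ft
          rw [hammingDist_comm] at hdw
          rw [Nat.odd_iff] at hoddutft ⊢
          omega
        have hoddwvt : Odd (hammingDist w vt) := by
          have ht1 := dist_triangle_mod2 ut ft vt
          have ht2 := dist_triangle_mod2 w ut vt
          rw [hammingDist_comm] at hdw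
          rw [hdvf, Nat.odd_iff] at hv
          rw [Nat.odd_iff] at hoddutft ⊢
          rw [hammingDist_comm vt ft] at hv
          omega
        obtain ⟨L1, hL1⟩ := ih ft ut w hwne hoddutft hoddwft
        obtain ⟨L2, hL2⟩ := H1 m w vt hoddwvt
        have h1 := hL1.map _ (cons_inj m a) (cons_dist m a)
        have h2 := hL2.map _ (cons_inj m (!a)) (cons_dist m (!a))
        have hjun : hammingDist (Fin.cons a w : Fin (m+1) → Bool) (Fin.cons (!a) w) = 1 := by
          rw [dist_cons]
          cases a <;> simp [hammingDist_self]
        have hdisj : ∀ x : Fin (m+1) → Bool,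
            ¬ ((∃ y, y ≠ ft ∧ (Fin.cons a y : Fin (m+1) → Bool) = x) ∧
               (∃ z, True ∧ (Fin.cons (!a) z : Fin (m+1) → Bool) = x)) := by
          rintro x ⟨⟨y, -, hy⟩, ⟨z, -, hz⟩⟩
          rw [← hz] at hy
          have := (cons_eq_cons.mp hy).1
          simp at this
        have happ := (h1.append h2 hjun hdisj).congr (T := fun x => x ≠ f) ?_
        · rw [← hcu, ← hcv]
          exact ⟨_, happ⟩
        · intro x
          constructor
          · rintro (⟨y, hy, rfl⟩ | ⟨z, -, rfl⟩)
            · intro hxf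
              rw [← hcf] at hxf
              exact hy (cons_eq_cons.mp hxf).2
            · intro hxf
              rw [← hcf] at hxf
              have := (cons_eq_cons.mp hxf).1
              simp at this
          · intro hxf
            rcases eq_or_ne (x 0) a with hx0 | hx0
            · left
              refine ⟨Fin.tail x, ?_, by rw [← hx0]; exact Fin.cons_self_tail x⟩
              intro htail
              apply hxf
              rw [← Fin.cons_self_tail x, hx0, htail, hcf]
            · right
              have hx0' : x 0 = !a := Bool.eq_not_iff.mpr hx0
              exact ⟨Fin.tail x, trivial, by rw [← hx0']; exact Fin.cons_self_tail x⟩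
      intro f u v huv hu hv
      obtain ⟨c, hc⟩ := Function.ne_iff.mp huv
      set e := Equiv.swap (0 : Fin (m+1)) c with he
      have hesymm : e.symm = e := Equiv.symm_swap 0 c
      have h0 : (u ∘ ⇑e) 0 ≠ (v ∘ ⇑e) 0 := by
        simpa [he, Equiv.swap_apply_left] using hc
      have hu' : Odd (hammingDist (u ∘ ⇑e) (f ∘ ⇑e)) := by rwa [dist_comp]
      have hv' : Odd (hammingDist (v ∘ ⇑e) (f ∘ ⇑e)) := by rwa [dist_comp]
      rcases eq_or_ne ((f ∘ ⇑e) 0) ((u ∘ ⇑e) 0) with hfu | hfu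
      · obtain ⟨L, hL⟩ := core (f ∘ ⇑e) (u ∘ ⇑e) (v ∘ ⇑e) h0 hfu hu' hv'
        exact ⟨_, IsHP.unreindex e hesymm hL⟩
      · have hfv : (f ∘ ⇑e) 0 = (v ∘ ⇑e) 0 := by
          cases h1 : (f ∘ ⇑e) 0 <;> cases h2 : (u ∘ ⇑e) 0 <;> cases h3 : (v ∘ ⇑e) 0 <;> simp_all
        obtain ⟨L, hL⟩ := core (f ∘ ⇑e) (v ∘ ⇑e) (u ∘ ⇑e) (Ne.symm h0) hfv hv' hu'
        exact ⟨_, IsHP.unreindex e hesymm hL.reverse⟩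

lemma card_words (m : ℕ) : Fintype.card (Fin m → Bool) = 2 ^ m := by
  simp [Fintype.card_fun]

lemma IsHP.length_true {m : ℕ} {u v : Fin m → Bool} {L} (h : IsHP (fun _ => True) u v L) :
    L.length = 2 ^ m := by
  obtain ⟨-, -, hnd, hcov, -⟩ := h
  have h1 : L.toFinset = Finset.univ := by
    apply Finset.eq_univ_iff_forall.mpr
    intro w
    rw [List.mem_toFinset]
    exact (hcov w).mpr trivial
  have h2 := List.toFinset_card_of_nodup hnd
  rw [h1, Finset.card_univ, card_words] at h2
  omega

lemma IsHP.length_ne {m : ℕ} {f u v : Fin m → Bool} {L} (h : IsHP (fun w => w ≠ f) u v L) :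
    L.length = 2 ^ m - 1 := by
  obtain ⟨-, -, hnd, hcov, -⟩ := h
  have h1 : L.toFinset = Finset.univ.erase f := by
    ext w
    rw [List.mem_toFinset, Finset.mem_erase]
    constructor
    · intro hw; exact ⟨(hcov w).mp hw, Finset.mem_univ w⟩
    · intro hw; exact (hcov w).mpr hw.1
  have h2 := List.toFinset_card_of_nodup hnd
  rw [h1, Finset.card_erase_of_mem (Finset.mem_univ f), Finset.card_univ, card_words] at h2
  omega

theorem good_path : ∀ n : ℕ, 3 ≤ n → Odd n →
    ∃ (P : List (Fin n → Bool)) (hne : P ≠ []),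
      P.length = 2 ^ (n-1) - 1 ∧ P.Nodup ∧
      (∀ x ∈ P, ∀ y ∈ P, x ≠ fun j => !(y j)) ∧
      (∀ x ∈ P, x ≠ (fun _ => false) ∧ x ≠ (fun _ => true)) ∧
      P.Chain' (fun a b => hammingDist a b = 1) ∧
      hammingDist (P.head hne) (P.getLast hne) = n - 1 := by
  intro n hn hodd
  rcases eq_or_lt_of_le hn with h3 | h4
  · -- n = 3
    subst h3
    refine ⟨[![false,false,true], ![false,true,true], ![false,true,false]],
      by simp, ?_, ?_, ?_, ?_, ?_, ?_⟩
    · decide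
    · decide
    · decide
    · decide
    · simp only [List.Chain', List.isChain_cons_cons, List.isChain_singleton, and_true]
      constructor <;> decide
    · decide
  · -- n ≥ 5
    obtain ⟨m, rfl⟩ : ∃ m, n = m + 2 := ⟨n - 2, by omega⟩
    have hm : 2 ≤ m := by omega
    have hmodd : Odd m := by
      rcases hodd with ⟨k, hk⟩
      exact ⟨k - 1, by omega⟩
    have hm0 : (0:ℕ) < m := by omega
    set z : Fin m → Bool := fun _ => false with hz
    set o : Fin m → Bool := fun _ => true with ho
    set e0 : Fin m → Bool := Function.update z ⟨0, hm0⟩ (!(z ⟨0, hm0⟩)) with he0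
    have hdz : hammingDist z e0 = 1 := dist_update z _
    obtain ⟨P1, hP1⟩ := H1 m z e0 (by rw [hdz]; exact odd_one)
    have hdoz : hammingDist o z = m := by
      simp [hammingDist, hz, ho]
    have he0o : e0 ≠ o := by
      intro h
      have h1 : e0 ⟨1, by omega⟩ = false := by
        rw [he0, Function.update_of_ne (by simp [Fin.ext_iff])]
      have h2 := congrFun h ⟨1, by omega⟩
      rw [h1] at h2
      simp [ho] at h2
    obtain ⟨P2, hP2⟩ := H2 m z e0 o he0o
      (by rw [hammingDist_comm, hdz]; exact odd_one)
      (by rw [hammingDist_comm o z] at hdoz ⊢; rw [hdoz]; exact hmodd)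
    -- embeddings
    set φB : (Fin m → Bool) → (Fin (m+2) → Bool) :=
      fun x => Fin.cons false (Fin.cons true x) with hφB
    set φA : (Fin m → Bool) → (Fin (m+2) → Bool) :=
      fun x => Fin.cons false (Fin.cons false x) with hφA
    have hinjB : Function.Injective φB := by
      intro x y hxy
      exact (cons_eq_cons.mp (cons_eq_cons.mp hxy).2).2
    have hinjA : Function.Injective φA := by
      intro x y hxy
      exact (cons_eq_cons.mp (cons_eq_cons.mp hxy).2).2
    have hdistB : ∀ a b, hammingDist (φB a) (φB b) = hammingDist a b := by
      intro a b
      rw [hφB]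
      simp [dist_cons]
    have hdistA : ∀ a b, hammingDist (φA a) (φA b) = hammingDist a b := by
      intro a b
      rw [hφA]
      simp [dist_cons]
    have h1 := hP1.map φB hinjB hdistB
    have h2 := hP2.map φA hinjA hdistA
    have hjun : hammingDist (φB e0) (φA e0) = 1 := by
      rw [hφB, hφA, dist_cons, dist_cons]
      simp [hammingDist_self]
    have hdisj : ∀ x, ¬ ((∃ y, True ∧ φB y = x) ∧ (∃ y, y ≠ z ∧ φA y = x)) := by
      rintro x ⟨⟨y, -, hy⟩, ⟨y', -, hy'⟩⟩
      rw [← hy'] at hy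
      have := (cons_eq_cons.mp (cons_eq_cons.mp hy).2).1
      exact Bool.noConfusion this
    have happ := h1.append h2 hjun hdisj
    obtain ⟨hh, hl, hnd, hcov, hch⟩ := happ
    set P := P1.map φB ++ P2.map φA with hP
    have hne : P ≠ [] := by
      intro hcon
      rw [hcon] at hh
      simp at hh
    -- lengths
    have hlen1 : P1.length = 2 ^ m := hP1.length_true
    have hlen2 : P2.length = 2 ^ m - 1 := hP2.length_ne
    have hlen : P.length = 2 ^ (m+2-1) - 1 := by
      rw [hP, List.length_append, List.length_map, List.length_map, hlen1, hlen2]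
      have h0 : (2:ℕ) ^ (m+1) = 2 * 2 ^ m := by rw [pow_succ]; ring
      have h1 : (1:ℕ) ≤ 2 ^ m := Nat.one_le_two_pow
      have h2 : m + 2 - 1 = m + 1 := by omega
      rw [h2]
      omega
    -- first coordinate of members is false
    have hx0 : ∀ x ∈ P, x 0 = false := by
      intro x hx
      rcases (hcov x).mp hx with ⟨y, -, rfl⟩ | ⟨y, -, rfl⟩
      · rw [hφB]; simp
      · rw [hφA]; simp
    refine ⟨P, hne, hlen, hnd, ?_, ?_, hch, ?_⟩
    · -- no complementary pairs
      intro x hx y hy hcon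
      have h1 := hx0 x hx
      have h2 := hx0 y hy
      have := congrFun hcon 0
      rw [h1, h2] at this
      exact Bool.noConfusion this
    · -- nonconstant
      intro x hx
      constructor
      · intro hcon
        rcases (hcov x).mp hx with ⟨y, -, hy⟩ | ⟨y, hyz, hy⟩
        · -- φB y has coordinate 1 = true
          have : x (Fin.succ 0) = true := by
            rw [← hy, hφB]
            simp [Fin.cons_succ]
          rw [hcon] at this
          exact Bool.noConfusion this
        · -- x = φA y with y ≠ z : some coordinate of y is true
          apply hyz
          funext j
          have : x (Fin.succ (Fin.succ j)) = y j := by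
            rw [← hy, hφA]
            simp [Fin.cons_succ]
          rw [hcon] at this
          rw [hz]
          exact this.symm
      · intro hcon
        have h1 := hx0 x hx
        rw [hcon] at h1
        exact Bool.noConfusion h1
    · -- endpoint distance
      have hhead : P.head hne = φB z := by
        have := List.head?_eq_head hne
        rw [hh] at this
        exact (Option.some_inj.mp this).symm
      have hlast : P.getLast hne = φA o := by
        have := List.getLast?_eq_getLast hne
        rw [hl] at this
        exact (Option.some_inj.mp this).symm
      rw [hhead, hlast, hφB, hφA]
      simp only [dist_cons]
      rw [hammingDist_comm o z] at hdoz
      rw [hdoz]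
      norm_num
      omega

end GrayAux

open GrayAux in
/-- for odd `n ≥ 3` there is a cyclic Gray ordering of all binary `n`-tuples
except the all-zeros and all-ones words, in which complementary words are at separation
`2^(n-1) - 1`. -/
theorem exists_complementary_gray_code_minus_two_words (n : ℕ) (hn : 3 ≤ n) (hodd : Odd n) :
    ∃ G : Fin (2 ^ n - 2) →
        {w : Fin n → Bool // w ≠ (fun _ => false) ∧ w ≠ (fun _ => true)},
      Function.Bijective G ∧
      (∀ i : Fin (2 ^ n - 2),
        hammingDist (G i).val
          (G ⟨(i.val + 1) % (2 ^ n - 2), Nat.mod_lt _ (by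
            have h := Nat.pow_le_pow_right (show 1 ≤ 2 by norm_num) hn
            have : (2:ℕ) ^ 3 = 8 := by norm_num
            omega)⟩).val = 1) ∧
      (∀ i : Fin (2 ^ n - 2),
        (G ⟨(i.val + (2 ^ (n - 1) - 1)) % (2 ^ n - 2), Nat.mod_lt _ (by
            have h := Nat.pow_le_pow_right (show 1 ≤ 2 by norm_num) hn
            have : (2:ℕ) ^ 3 = 8 := by norm_num
            omega)⟩).val = fun j => ! (G i).val j) := by
  classical
  obtain ⟨P, hne, hlen, hnodup, hncompl, hnconst, hchain, hdist⟩ := good_path n hn hodd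
  set neg : (Fin n → Bool) → (Fin n → Bool) := fun w => fun j => !(w j) with hneg
  set C := P ++ P.map neg with hCdef
  have hpow : 2 ^ n = 2 * 2 ^ (n-1) := by
    have h1 : n - 1 + 1 = n := by omega
    calc 2^n = 2^(n-1+1) := by rw [h1]
    _ = 2^(n-1) * 2 := pow_succ 2 (n-1)
    _ = 2 * 2^(n-1) := by ring
  have hp2 : (4:ℕ) ≤ 2 ^ (n-1) := by
    calc (4:ℕ) = 2^2 := by norm_num
    _ ≤ 2^(n-1) := Nat.pow_le_pow_right (by norm_num) (by omega)
  set N := 2 ^ n - 2 with hN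
  set K := 2 ^ (n-1) - 1 with hK
  have hNK : N = 2 * K := by omega
  have hKpos : 0 < K := by omega
  have hlenC : C.length = N := by
    rw [hCdef, List.length_append, List.length_map, hlen]
    omega
  have hPpos : 0 < P.length := by rw [hlen]; omega
  -- membership facts
  have hmem : ∀ w ∈ C, w ≠ (fun _ => false) ∧ w ≠ (fun _ => true) := by
    intro w hw
    rw [hCdef, List.mem_append] at hw
    rcases hw with hw | hw
    · exact hnconst w hw
    · rw [List.mem_map] at hw
      obtain ⟨y, hy, rfl⟩ := hw
      obtain ⟨hy1, hy2⟩ := hnconst y hy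
      constructor
      · intro hcon
        apply hy2
        funext j
        have := congrFun hcon j
        simp only [hneg, Bool.not_eq_false'] at this
        exact this
      · intro hcon
        apply hy1
        funext j
        have := congrFun hcon j
        simp only [hneg, Bool.not_eq_true'] at this
        exact this
  have hnodupC : C.Nodup := by
    rw [hCdef, List.nodup_append']
    refine ⟨hnodup, ?_, ?_⟩
    · apply hnodup.map
      intro x y hxy
      funext j
      have := congrFun hxy j
      simp only [hneg] at this
      exact Bool.not_inj this
    · intro w hw hw'
      rw [List.mem_map] at hw'
      obtain ⟨y, hy, hyw⟩ := hw'
      exact hncompl w hw y hy hyw.symm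
  have hchainC : C.Chain' (fun a b => hammingDist a b = 1) := by
    rw [hCdef]; unfold List.Chain' at hchain ⊢; rw [List.isChain_append]
    refine ⟨hchain, ?_, ?_⟩
    · rw [List.isChain_map]
      apply hchain.imp
      intro a b hab
      show hammingDist (neg a) (neg b) = 1
      rw [hneg]
      rw [dist_compl_compl]
      exact hab
    · intro x hx y hy
      rw [List.getLast?_eq_getLast hne, Option.mem_some_iff] at hx
      rw [List.head?_map, List.head?_eq_head hne] at hy
      simp only [Option.mem_def, Option.map_some, Option.some.injEq] at hy
      subst hx
      rw [← hy]
      show hammingDist (P.getLast hne) (neg (P.head hne)) = 1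
      rw [hneg]
      have hh : hammingDist (P.getLast hne) (fun j => !(P.head hne j)) =
          n - hammingDist (P.getLast hne) (P.head hne) := dist_compl_right _ _
      rw [hh, hammingDist_comm, hdist]
      omega
  -- getElem helpers
  have hgetC : ∀ {a b : ℕ} (_ : a = b) (ha : a < C.length) (hb : b < C.length),
      C[a]'ha = C[b]'hb := by
    intro a b h ha hb
    subst h
    rfl
  have hinjC : ∀ (i j : ℕ) (hi : i < C.length) (hj : j < C.length), C[i] = C[j] → i = j := by
    intro i j hi hj he
    have := (List.Nodup.get_inj_iff hnodupC (i := ⟨i, hi⟩) (j := ⟨j, hj⟩)).mp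
      (by simpa [List.get_eq_getElem] using he)
    simpa [Fin.ext_iff] using this
  have hCleft : ∀ (k : ℕ) (hk : k < P.length),
      C[k]'(by rw [hlenC]; rw [hlen] at hk; omega) = P[k] := by
    intro k hk
    exact List.getElem_append_left hk
  have hCright : ∀ (k : ℕ) (hk : k < P.length),
      C[P.length + k]'(by rw [hlenC]; rw [hlen] at hk ⊢; omega) = neg (P[k]) := by
    intro k hk
    have step : (P ++ P.map neg)[P.length + k]'(by
        rw [List.length_append, List.length_map]; omega) =
        (P.map neg)[P.length + k - P.length]'(by rw [List.length_map]; omega) :=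
      List.getElem_append_right (by omega)
    have h1 : P.length + k - P.length = k := by omega
    have step2 : (P.map neg)[P.length + k - P.length]'(by rw [List.length_map]; omega) =
        (P.map neg)[k]'(by rw [List.length_map]; omega) := by
      congr 1
    have step3 : (P.map neg)[k]'(by rw [List.length_map]; omega) = neg (P[k]) :=
      List.getElem_map _
    exact step.trans (step2.trans step3)
  -- the antipodal property at the level of C
  have hanti : ∀ (k : ℕ) (hk : k < N),
      C[(k + K) % N]'(by rw [hlenC]; exact Nat.mod_lt _ (by omega)) =
        neg (C[k]'(by rw [hlenC]; exact hk)) := by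
    intro k hk
    by_cases hcase : k < K
    · have hmod : (k + K) % N = P.length + k := by
        rw [Nat.mod_eq_of_lt (by omega), hlen]
        omega
      have g1 := hgetC hmod (by rw [hlenC]; exact Nat.mod_lt _ (by omega))
        (by rw [hlenC, hlen]; omega)
      rw [g1, hCright k (by rw [hlen]; omega), hCleft k (by rw [hlen]; omega)]
    · have hmod : (k + K) % N = k - K := by
        rw [show k + K = N + (k - K) by omega, Nat.add_mod_left,
          Nat.mod_eq_of_lt (by omega)]
      have h1 : k - K < P.length := by rw [hlen]; omega
      have g1 := hgetC hmod (by rw [hlenC]; exact Nat.mod_lt _ (by omega))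
        (by rw [hlenC]; omega)
      have h2 : k = P.length + (k - K) := by rw [hlen]; omega
      have g2 := hgetC h2 (by rw [hlenC]; exact hk) (by rw [hlenC, hlen]; omega)
      rw [g1, g2, hCleft (k - K) h1, hCright (k - K) h1]
      funext j
      simp only [hneg, Bool.not_not]
  -- define G
  refine ⟨fun i => ⟨C[i.val]'(by rw [hlenC]; exact i.isLt),
      hmem _ (List.getElem_mem _)⟩, ?_, ?_, ?_⟩
  · -- bijective
    rw [Fintype.bijective_iff_injective_and_card]
    constructor
    · intro i j hij
      have h1 : C[i.val]'(by rw [hlenC]; exact i.isLt) =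
          C[j.val]'(by rw [hlenC]; exact j.isLt) := congrArg Subtype.val hij
      exact Fin.ext (hinjC _ _ _ _ h1)
    · rw [Fintype.card_fin, Fintype.card_subtype]
      have hset : (Finset.univ.filter fun w : Fin n → Bool =>
          w ≠ (fun _ => false) ∧ w ≠ (fun _ => true)) =
          Finset.univ \ {(fun _ => false : Fin n → Bool), (fun _ => true)} := by
        ext w
        simp [not_or]
      have hne2 : (fun _ => false : Fin n → Bool) ∉
          ({(fun _ => true : Fin n → Bool)} : Finset (Fin n → Bool)) := by
        simp only [Finset.mem_singleton]
        intro h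
        have := congrFun h ⟨0, by omega⟩
        exact Bool.noConfusion this
      rw [hset, Finset.card_sdiff_of_subset (Finset.subset_univ _), Finset.card_univ, card_words,
        Finset.card_insert_of_notMem hne2, Finset.card_singleton]
  · -- adjacency
    intro i
    have hilt : i.val < N := i.isLt
    by_cases hi : i.val + 1 < N
    · have hmod : (i.val + 1) % N = i.val + 1 := Nat.mod_eq_of_lt hi
      have g1 := hgetC hmod (by rw [hlenC]; exact Nat.mod_lt _ (by omega))
        (by rw [hlenC]; omega)
      show hammingDist (C[i.val]'(by rw [hlenC]; exact i.isLt))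
        (C[(i.val + 1) % N]'(by rw [hlenC]; exact Nat.mod_lt _ (by omega))) = 1
      rw [g1]
      have := List.isChain_iff_getElem.mp hchainC i.val (by rw [hlenC]; omega)
      simpa [List.get_eq_getElem] using this
    · have hieq : i.val = N - 1 := by omega
      have hmod : (i.val + 1) % N = 0 := by
        rw [show i.val + 1 = N by omega]
        exact Nat.mod_self N
      have g1 := hgetC hmod (by rw [hlenC]; exact Nat.mod_lt _ (by omega))
        (by rw [hlenC]; omega)
      have g2 := hgetC hieq (by rw [hlenC]; exact i.isLt) (by rw [hlenC]; omega)
      show hammingDist (C[i.val]'(by rw [hlenC]; exact i.isLt))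
        (C[(i.val + 1) % N]'(by rw [hlenC]; exact Nat.mod_lt _ (by omega))) = 1
      rw [g1, g2]
      have e1 : C[N-1]'(by rw [hlenC]; omega) = neg (P.getLast hne) := by
        have h2 : N - 1 = P.length + (K - 1) := by rw [hlen]; omega
        have g3 := hgetC h2 (by rw [hlenC]; omega) (by rw [hlenC, hlen]; omega)
        rw [g3, hCright (K-1) (by rw [hlen]; omega)]
        have h4 : P.getLast hne = P[P.length - 1]'(by omega) := List.getLast_eq_getElem hne
        have h5 : P[K-1]'(by rw [hlen]; omega) = P[P.length - 1]'(by omega) := by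
          congr 1
          rw [hlen]
        rw [h4, h5]
      have e2 : C[0]'(by rw [hlenC]; omega) = P.head hne := by
        have h4 := hCleft 0 hPpos
        rw [h4]
        exact (List.head_eq_getElem hne).symm
      rw [e1, e2]
      show hammingDist (neg (P.getLast hne)) (P.head hne) = 1
      rw [hneg, hammingDist_comm]
      have hh : hammingDist (P.head hne) (fun j => !(P.getLast hne j)) =
          n - hammingDist (P.head hne) (P.getLast hne) := dist_compl_right _ _
      rw [hh, hdist]
      omega
  · -- antipodal
    intro i
    exact hanti i.val i.isLt
end

section
/- For every odd n ≥ 3 there exists a cyclic binary Gray code G : Fin (2^n) → (Fin n → Bool) enumerating all n-tuples such that for every i, the bitwise complement of G(i) occurs at position i + 2^(n-1) + 1 or position i + 2^(n-1) - 1 (indices mod 2^n). -/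
def Kf : ℕ → ℕ → ℕ → Bool
  | 0, i, _ => decide (i % 2 = 1)
  | t+1, i, c =>
    if i < 2^(2*t+1) then
      if 2*t+1 ≤ c then false else Kf t i c
    else if i < 2*2^(2*t+1) then
      if c = 2*t+2 then true else if c = 2*t+1 then false else Kf t (2*2^(2*t+1)-1-i) c
    else
      if c = 2*t+2 then decide (((i-2*2^(2*t+1))/2 + (i-2*2^(2*t+1))) % 2 = 0)
      else if c = 2*t+1 then true
      else Kf t ((i-2*2^(2*t+1))/2) c

lemma K_zero : ∀ t c, c < 2*t+1 → Kf t 0 c = false := by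
  intro t c hc
  cases t with
  | zero => simp [Kf]
  | succ t => simp only [Kf]; rw [if_pos (by positivity)]; split <;> [rfl; exact K_zero t c (by omega)]

lemma K_last : ∀ t c, c < 2*t+1 → Kf t (2^(2*t+1)-1) c = true := by
  intro t c hc
  cases t with
  | zero => interval_cases c <;> simp [Kf]
  | succ t =>
    have hL : (1:ℕ) ≤ 2^(2*t+1) := Nat.one_le_two_pow
    have h4 : (2:ℕ)^(2*(t+1)+1) = 4*2^(2*t+1) := by ring
    simp only [Kf]
    rw [if_neg (by omega), if_neg (by omega)]
    have hk : 2^(2*(t+1)+1) - 1 - 2*2^(2*t+1) = 2*2^(2*t+1)-1 := by omega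
    rw [hk]
    have hj : (2*2^(2*t+1)-1)/2 = 2^(2*t+1)-1 := by omega
    rcases Nat.lt_or_ge c (2*t+1) with h | h
    · rw [if_neg (by omega), if_neg (by omega), hj]; exact K_last t c h
    · rcases Nat.eq_or_lt_of_le h with h1 | h1
      · rw [if_neg (by omega), if_pos (by omega)]
      · rw [if_pos (by omega), hj]
        have he : (2:ℕ)^(2*t+1) = 2*2^(2*t) := by ring
        have h1 : (1:ℕ) ≤ 2^(2*t) := Nat.one_le_two_pow
        simp only [decide_eq_true_eq]
        omega
section
variable (t i c : ℕ)

lemma Kf_A (hi : i < 2^(2*t+1)) (hc : c < 2*t+1) : Kf (t+1) i c = Kf t i c := by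
  simp only [Kf]; rw [if_pos hi, if_neg (by omega)]

lemma Kf_Aa (hi : i < 2^(2*t+1)) (hc : 2*t+1 ≤ c) : Kf (t+1) i c = false := by
  simp only [Kf]; rw [if_pos hi, if_pos hc]

lemma Kf_B (hi : 2^(2*t+1) ≤ i) (hi2 : i < 2*2^(2*t+1)) (hc : c < 2*t+1) :
    Kf (t+1) i c = Kf t (2*2^(2*t+1)-1-i) c := by
  simp only [Kf]; rw [if_neg (by omega), if_pos hi2, if_neg (by omega), if_neg (by omega)]

lemma Kf_Ba (hi : 2^(2*t+1) ≤ i) (hi2 : i < 2*2^(2*t+1)) : Kf (t+1) i (2*t+1) = false := by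
  simp only [Kf]; rw [if_neg (by omega), if_pos hi2, if_neg (by omega)]; simp

lemma Kf_Bb (hi : 2^(2*t+1) ≤ i) (hi2 : i < 2*2^(2*t+1)) : Kf (t+1) i (2*t+2) = true := by
  simp only [Kf]; rw [if_neg (by omega), if_pos hi2]; simp

lemma Kf_C (hi : 2*2^(2*t+1) ≤ i) (hc : c < 2*t+1) :
    Kf (t+1) i c = Kf t ((i-2*2^(2*t+1))/2) c := by
  simp only [Kf]; rw [if_neg (by omega), if_neg (by omega), if_neg (by omega), if_neg (by omega)]

lemma Kf_Ca (hi : 2*2^(2*t+1) ≤ i) : Kf (t+1) i (2*t+1) = true := by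
  simp only [Kf]; rw [if_neg (by omega), if_neg (by omega), if_neg (by omega)]; simp

lemma Kf_Cb (hi : 2*2^(2*t+1) ≤ i) :
    Kf (t+1) i (2*t+2) = decide (((i-2*2^(2*t+1))/2 + (i-2*2^(2*t+1))) % 2 = 0) := by
  simp only [Kf]; rw [if_neg (by omega), if_neg (by omega)]; simp

end
lemma K_inj : ∀ t i i', i < 2^(2*t+1) → i' < 2^(2*t+1) →
    (∀ c < 2*t+1, Kf t i c = Kf t i' c) → i = i' := by
  intro t
  induction t with
  | zero =>
    intro i i' hi hi' h
    have := h 0 (by omega)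
    simp only [Kf, decide_eq_decide] at this
    omega
  | succ t ih =>
    intro i i' hi hi' h
    have hL : (1:ℕ) ≤ 2^(2*t+1) := Nat.one_le_two_pow
    have h4 : (2:ℕ)^(2*(t+1)+1) = 4*2^(2*t+1) := by ring
    have ha := h (2*t+1) (by omega)
    have hb := h (2*t+2) (by omega)
    have key : ∀ j j', j < 2^(2*t+1) → j' < 2^(2*t+1) →
        (∀ c < 2*t+1, Kf t j c = Kf t j' c) → j = j' := ih
    -- case analysis on segments
    rcases Nat.lt_or_ge i (2^(2*t+1)) with s1 | s1 <;>
      rcases Nat.lt_or_ge i' (2^(2*t+1)) with s1' | s1'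
    · -- both A
      exact key i i' s1 s1' (fun c hc => by
        rw [← Kf_A t i c s1 hc, ← Kf_A t i' c s1' hc]; exact h c (by omega))
    · rcases Nat.lt_or_ge i' (2*2^(2*t+1)) with s2' | s2'
      · rw [Kf_Aa t i _ s1 (by omega), Kf_Bb t i' s1' s2'] at hb; exact absurd hb (by simp)
      · rw [Kf_Aa t i _ s1 (by omega), Kf_Ca t i' s2'] at ha; exact absurd ha (by simp)
    · rcases Nat.lt_or_ge i (2*2^(2*t+1)) with s2 | s2
      · rw [Kf_Bb t i s1 s2, Kf_Aa t i' _ s1' (by omega)] at hb; exact absurd hb (by simp)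
      · rw [Kf_Ca t i s2, Kf_Aa t i' _ s1' (by omega)] at ha; exact absurd ha (by simp)
    · rcases Nat.lt_or_ge i (2*2^(2*t+1)) with s2 | s2 <;>
        rcases Nat.lt_or_ge i' (2*2^(2*t+1)) with s2' | s2'
      · -- both B
        have := key (2*2^(2*t+1)-1-i) (2*2^(2*t+1)-1-i') (by omega) (by omega) (fun c hc => by
          rw [← Kf_B t i c s1 s2 hc, ← Kf_B t i' c s1' s2' hc]; exact h c (by omega))
        omega
      · rw [Kf_Ba t i s1 s2, Kf_Ca t i' s2'] at ha; exact absurd ha (by simp)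
      · rw [Kf_Ca t i s2, Kf_Ba t i' s1' s2'] at ha; exact absurd ha (by simp)
      · -- both C
        have hj := key ((i-2*2^(2*t+1))/2) ((i'-2*2^(2*t+1))/2) (by omega) (by omega)
          (fun c hc => by
          rw [← Kf_C t i c s2 hc, ← Kf_C t i' c s2' hc]; exact h c (by omega))
        rw [Kf_Cb t i s2, Kf_Cb t i' s2'] at hb
        simp only [decide_eq_decide] at hb
        omega
lemma K_gray : ∀ t i, i + 1 < 2^(2*t+1) →
    ∃ d < 2*t+1, ∀ c < 2*t+1,
      Kf t (i+1) c = if c = d then !(Kf t i c) else Kf t i c := by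
  intro t
  induction t with
  | zero =>
    intro i hi
    refine ⟨0, by omega, fun c hc => ?_⟩
    have : i = 0 := by omega
    subst this
    interval_cases c
    simp [Kf]
  | succ t ih =>
    intro i hi
    have hL : (1:ℕ) ≤ 2^(2*t+1) := Nat.one_le_two_pow
    have h4 : (2:ℕ)^(2*(t+1)+1) = 4*2^(2*t+1) := by ring
    rcases Nat.lt_or_ge (i+1) (2^(2*t+1)) with s1 | s1
    · -- A to A
      obtain ⟨d, hd, hP⟩ := ih i s1
      refine ⟨d, by omega, fun c hc => ?_⟩
      rcases Nat.lt_or_ge c (2*t+1) with hc1 | hc1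
      · rw [Kf_A t (i+1) c s1 hc1, Kf_A t i c (by omega) hc1]; exact hP c hc1
      · rw [if_neg (by omega), Kf_Aa t (i+1) c s1 hc1, Kf_Aa t i c (by omega) hc1]
    · rcases Nat.eq_or_lt_of_le s1 with s2 | s2
      · -- A to B seam, i = L - 1
        refine ⟨2*t+2, by omega, fun c hc => ?_⟩
        have hi0 : i < 2^(2*t+1) := by omega
        have hB1 : 2^(2*t+1) ≤ i+1 := by omega
        have hB2 : i+1 < 2*2^(2*t+1) := by omega
        rcases Nat.lt_or_ge c (2*t+1) with hc1 | hc1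
        · rw [if_neg (by omega), Kf_B t (i+1) c hB1 hB2 hc1, Kf_A t i c hi0 hc1]
          congr 1; omega
        · rcases Nat.eq_or_lt_of_le hc1 with hc2 | hc2
          · subst hc2
            rw [if_neg (by omega), Kf_Ba t (i+1) hB1 hB2, Kf_Aa t i _ hi0 (by omega)]
          · have hc3 : c = 2*t+2 := by omega
            subst hc3
            rw [if_pos rfl, Kf_Bb t (i+1) hB1 hB2, Kf_Aa t i _ hi0 (by omega)]
            rfl
      · rcases Nat.lt_or_ge (i+1) (2*2^(2*t+1)) with s3 | s3
        · -- B to B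
          obtain ⟨d, hd, hP⟩ := ih (2*2^(2*t+1)-2-i) (by omega)
          have e1 : 2*2^(2*t+1)-2-i+1 = 2*2^(2*t+1)-1-i := by omega
          refine ⟨d, by omega, fun c hc => ?_⟩
          rcases Nat.lt_or_ge c (2*t+1) with hc1 | hc1
          · rw [Kf_B t (i+1) c (by omega) s3 hc1, Kf_B t i c (by omega) (by omega) hc1]
            have hP' := hP c hc1
            rw [e1] at hP'
            have e2 : 2*2^(2*t+1)-1-(i+1) = 2*2^(2*t+1)-2-i := by omega
            rw [e2]
            rcases eq_or_ne c d with h | h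
            · rw [if_pos h] at hP' ⊢; rw [hP']; simp
            · rw [if_neg h] at hP' ⊢; rw [hP']
          · rcases Nat.eq_or_lt_of_le hc1 with hc2 | hc2
            · rw [if_neg (by omega), ← hc2, Kf_Ba t (i+1) (by omega) s3,
                Kf_Ba t i (by omega) (by omega)]
            · have hc3 : c = 2*t+2 := by omega
              subst hc3
              rw [if_neg (by omega), Kf_Bb t (i+1) (by omega) s3,
                Kf_Bb t i (by omega) (by omega)]
        · rcases Nat.eq_or_lt_of_le s3 with s4 | s4
          · -- B to C seam, i = 2L-1
            refine ⟨2*t+1, by omega, fun c hc => ?_⟩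
            have hBi1 : 2^(2*t+1) ≤ i := by omega
            have hBi2 : i < 2*2^(2*t+1) := by omega
            have hC : 2*2^(2*t+1) ≤ i+1 := by omega
            rcases Nat.lt_or_ge c (2*t+1) with hc1 | hc1
            · rw [if_neg (by omega), Kf_C t (i+1) c hC hc1, Kf_B t i c hBi1 hBi2 hc1]
              congr 1; omega
            · rcases Nat.eq_or_lt_of_le hc1 with hc2 | hc2
              · rw [if_pos hc2.symm, ← hc2, Kf_Ca t (i+1) hC, Kf_Ba t i hBi1 hBi2]; rfl
              · have hc3 : c = 2*t+2 := by omega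
                subst hc3
                rw [if_neg (by omega), Kf_Cb t (i+1) hC, Kf_Bb t i hBi1 hBi2]
                have : i+1-2*2^(2*t+1) = 0 := by omega
                rw [this]
                rfl
          · -- C to C
            have hCi : 2*2^(2*t+1) ≤ i := by omega
            have hCi1 : 2*2^(2*t+1) ≤ i+1 := by omega
            rcases Nat.even_or_odd (i-2*2^(2*t+1)) with he | ho
            · -- k even: flip coord 2t+2
              obtain ⟨u, hu⟩ := he
              have ej : (i+1-2*2^(2*t+1))/2 = (i-2*2^(2*t+1))/2 := by omega
              refine ⟨2*t+2, by omega, fun c hc => ?_⟩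
              rcases Nat.lt_or_ge c (2*t+1) with hc1 | hc1
              · rw [if_neg (by omega), Kf_C t (i+1) c hCi1 hc1, Kf_C t i c hCi hc1, ej]
              · rcases Nat.eq_or_lt_of_le hc1 with hc2 | hc2
                · rw [if_neg (by omega), ← hc2, Kf_Ca t (i+1) hCi1, Kf_Ca t i hCi]
                · have hc3 : c = 2*t+2 := by omega
                  subst hc3
                  rw [if_pos rfl, Kf_Cb t (i+1) hCi1, Kf_Cb t i hCi, ej]
                  by_cases hq : ((i-2*2^(2*t+1))/2 + (i-2*2^(2*t+1))) % 2 = 0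
                  · rw [decide_eq_true hq, decide_eq_false (by omega)]; rfl
                  · rw [decide_eq_false hq, decide_eq_true (by omega)]; rfl
            · -- k odd: step in K
              obtain ⟨u, hu⟩ := ho
              have hjlt : (i-2*2^(2*t+1))/2 + 1 < 2^(2*t+1) := by omega
              obtain ⟨d, hd, hP⟩ := ih ((i-2*2^(2*t+1))/2) hjlt
              have ej : (i+1-2*2^(2*t+1))/2 = (i-2*2^(2*t+1))/2 + 1 := by omega
              refine ⟨d, by omega, fun c hc => ?_⟩
              rcases Nat.lt_or_ge c (2*t+1) with hc1 | hc1
              · rw [Kf_C t (i+1) c hCi1 hc1, Kf_C t i c hCi hc1, ej]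
                exact hP c hc1
              · rcases Nat.eq_or_lt_of_le hc1 with hc2 | hc2
                · rw [if_neg (by omega), ← hc2, Kf_Ca t (i+1) hCi1, Kf_Ca t i hCi]
                · have hc3 : c = 2*t+2 := by omega
                  subst hc3
                  rw [if_neg (by omega), Kf_Cb t (i+1) hCi1, Kf_Cb t i hCi, ej,
                    decide_eq_decide]
                  omega
def Gf (t i c : ℕ) : Bool :=
  if c = 2*t+2 then decide (2^(2*t+2) ≤ i)
  else if 2^(2*t+2) ≤ i then
    (if c = 2*t+1 then decide (((i - 2^(2*t+2))/2 + i) % 2 = 1)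
     else !(Kf t ((i - 2^(2*t+2))/2) c))
  else
    (if c = 2*t+1 then decide ((i/2 + i) % 2 = 1)
     else Kf t (i/2) c)

section
variable (t i c : ℕ)

lemma Gf_lo (hi : i < 2^(2*t+2)) (hc : c < 2*t+1) : Gf t i c = Kf t (i/2) c := by
  simp only [Gf]; rw [if_neg (by omega), if_neg (by omega), if_neg (by omega)]

lemma Gf_lo_p (hi : i < 2^(2*t+2)) : Gf t i (2*t+1) = decide ((i/2 + i) % 2 = 1) := by
  simp only [Gf]; rw [if_neg (by omega), if_neg (by omega)]; simp

lemma Gf_lo_b (hi : i < 2^(2*t+2)) : Gf t i (2*t+2) = false := by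
  simp only [Gf]; simp; omega

lemma Gf_hi (hi : 2^(2*t+2) ≤ i) (hc : c < 2*t+1) :
    Gf t i c = !(Kf t ((i - 2^(2*t+2))/2) c) := by
  simp only [Gf]; rw [if_neg (by omega), if_pos hi, if_neg (by omega)]

lemma Gf_hi_p (hi : 2^(2*t+2) ≤ i) :
    Gf t i (2*t+1) = decide (((i - 2^(2*t+2))/2 + i) % 2 = 1) := by
  simp only [Gf]; rw [if_neg (by omega), if_pos hi]; simp

lemma Gf_hi_b (hi : 2^(2*t+2) ≤ i) : Gf t i (2*t+2) = true := by
  simp only [Gf]; simpa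

end
lemma G_inj (t i i' : ℕ) (hi : i < 2^(2*t+3)) (hi' : i' < 2^(2*t+3))
    (h : ∀ c < 2*t+3, Gf t i c = Gf t i' c) : i = i' := by
  have hL : (1:ℕ) ≤ 2^(2*t+1) := Nat.one_le_two_pow
  have hM : (2:ℕ)^(2*t+2) = 2*2^(2*t+1) := by ring
  have hN : (2:ℕ)^(2*t+3) = 4*2^(2*t+1) := by ring
  have hb := h (2*t+2) (by omega)
  have hp := h (2*t+1) (by omega)
  rcases Nat.lt_or_ge i (2^(2*t+2)) with s | s <;> rcases Nat.lt_or_ge i' (2^(2*t+2)) with s' | s'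
  · have hj : i/2 = i'/2 := by
      refine K_inj t (i/2) (i'/2) (by omega) (by omega) (fun c hc => ?_)
      rw [← Gf_lo t i c s hc, ← Gf_lo t i' c s' hc]; exact h c (by omega)
    rw [Gf_lo_p t i s, Gf_lo_p t i' s', decide_eq_decide] at hp
    omega
  · rw [Gf_lo_b t i s, Gf_hi_b t i' s'] at hb; exact absurd hb (by simp)
  · rw [Gf_hi_b t i s, Gf_lo_b t i' s'] at hb; exact absurd hb (by simp)
  · have hj : (i-2^(2*t+2))/2 = (i'-2^(2*t+2))/2 := by
      refine K_inj t _ _ (by omega) (by omega) (fun c hc => ?_)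
      have := h c (by omega)
      rw [Gf_hi t i c s hc, Gf_hi t i' c s' hc] at this
      exact Bool.not_inj this
    rw [Gf_hi_p t i s, Gf_hi_p t i' s', decide_eq_decide] at hp
    omega

lemma G_step (t i : ℕ) (hi : i + 1 < 2^(2*t+3)) :
    ∃ d < 2*t+3, ∀ c < 2*t+3, Gf t (i+1) c = if c = d then !(Gf t i c) else Gf t i c := by
  have hL : (1:ℕ) ≤ 2^(2*t+1) := Nat.one_le_two_pow
  have hM : (2:ℕ)^(2*t+2) = 2*2^(2*t+1) := by ring
  have hN : (2:ℕ)^(2*t+3) = 4*2^(2*t+1) := by ring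
  rcases Nat.even_or_odd i with ⟨u, hu⟩ | ⟨u, hu⟩
  · -- i even : flip coordinate 2t+1
    refine ⟨2*t+1, by omega, fun c hc => ?_⟩
    rcases Nat.lt_or_ge i (2^(2*t+2)) with s | s
    · have s1 : i + 1 < 2^(2*t+2) := by omega
      have ej : (i+1)/2 = i/2 := by omega
      rcases Nat.lt_or_ge c (2*t+1) with hc1 | hc1
      · rw [if_neg (by omega), Gf_lo t (i+1) c s1 hc1, Gf_lo t i c s hc1, ej]
      · rcases Nat.eq_or_lt_of_le hc1 with hc2 | hc2
        · rw [if_pos hc2.symm, ← hc2, Gf_lo_p t (i+1) s1, Gf_lo_p t i s, ej]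
          by_cases hq : (i/2 + i) % 2 = 1
          · rw [decide_eq_true hq, decide_eq_false (by omega)]; rfl
          · rw [decide_eq_false hq, decide_eq_true (by omega)]; rfl
        · have hc3 : c = 2*t+2 := by omega
          subst hc3
          rw [if_neg (by omega), Gf_lo_b t (i+1) s1, Gf_lo_b t i s]
    · have s1 : 2^(2*t+2) ≤ i + 1 := by omega
      have ej : (i+1-2^(2*t+2))/2 = (i-2^(2*t+2))/2 := by omega
      rcases Nat.lt_or_ge c (2*t+1) with hc1 | hc1
      · rw [if_neg (by omega), Gf_hi t (i+1) c s1 hc1, Gf_hi t i c s hc1, ej]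
      · rcases Nat.eq_or_lt_of_le hc1 with hc2 | hc2
        · rw [if_pos hc2.symm, ← hc2, Gf_hi_p t (i+1) s1, Gf_hi_p t i s, ej]
          by_cases hq : ((i-2^(2*t+2))/2 + i) % 2 = 1
          · rw [decide_eq_true hq, decide_eq_false (by omega)]; rfl
          · rw [decide_eq_false hq, decide_eq_true (by omega)]; rfl
        · have hc3 : c = 2*t+2 := by omega
          subst hc3
          rw [if_neg (by omega), Gf_hi_b t (i+1) s1, Gf_hi_b t i s]
  · -- i odd
    rcases Nat.lt_or_ge (i+1) (2^(2*t+2)) with s | s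
    · -- low half, step in K
      obtain ⟨d, hd, hP⟩ := K_gray t (i/2) (by omega)
      have ej : (i+1)/2 = i/2 + 1 := by omega
      refine ⟨d, by omega, fun c hc => ?_⟩
      rcases Nat.lt_or_ge c (2*t+1) with hc1 | hc1
      · rw [Gf_lo t (i+1) c s hc1, Gf_lo t i c (by omega) hc1, ej]; exact hP c hc1
      · rcases Nat.eq_or_lt_of_le hc1 with hc2 | hc2
        · rw [if_neg (by omega), ← hc2, Gf_lo_p t (i+1) s, Gf_lo_p t i (by omega), ej,
            decide_eq_decide]
          omega
        · have hc3 : c = 2*t+2 := by omega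
          subst hc3
          rw [if_neg (by omega), Gf_lo_b t (i+1) s, Gf_lo_b t i (by omega)]
    · rcases Nat.eq_or_lt_of_le s with s2 | s2
      · -- seam i + 1 = M : flip coordinate 2t+2
        refine ⟨2*t+2, by omega, fun c hc => ?_⟩
        have slo : i < 2^(2*t+2) := by omega
        rcases Nat.lt_or_ge c (2*t+1) with hc1 | hc1
        · rw [if_neg (by omega), Gf_hi t (i+1) c (by omega) hc1, Gf_lo t i c slo hc1]
          have e1 : (i+1-2^(2*t+2))/2 = 0 := by omega
          have e2 : i/2 = 2^(2*t+1)-1 := by omega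
          rw [e1, e2, K_zero t c hc1, K_last t c hc1]
          rfl
        · rcases Nat.eq_or_lt_of_le hc1 with hc2 | hc2
          · subst hc2
            rw [if_neg (by omega), Gf_hi_p t (i+1) (by omega), Gf_lo_p t i slo,
              decide_eq_decide]
            have e1 : (i+1-2^(2*t+2))/2 = 0 := by omega
            rw [e1]
            omega
          · have hc3 : c = 2*t+2 := by omega
            subst hc3
            rw [if_pos rfl, Gf_hi_b t (i+1) (by omega), Gf_lo_b t i slo]
            rfl
      · -- high half, step in K
        have shi : 2^(2*t+2) ≤ i := by omega
        obtain ⟨d, hd, hP⟩ := K_gray t ((i-2^(2*t+2))/2) (by omega)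
        have ej : (i+1-2^(2*t+2))/2 = (i-2^(2*t+2))/2 + 1 := by omega
        refine ⟨d, by omega, fun c hc => ?_⟩
        rcases Nat.lt_or_ge c (2*t+1) with hc1 | hc1
        · rw [Gf_hi t (i+1) c (by omega) hc1, Gf_hi t i c shi hc1, ej]
          have := hP c hc1
          rcases eq_or_ne c d with h | h
          · rw [if_pos h] at this ⊢; rw [this]
          · rw [if_neg h] at this ⊢; rw [this]
        · rcases Nat.eq_or_lt_of_le hc1 with hc2 | hc2
          · rw [if_neg (by omega), ← hc2, Gf_hi_p t (i+1) (by omega), Gf_hi_p t i shi, ej,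
              decide_eq_decide]
            omega
          · have hc3 : c = 2*t+2 := by omega
            subst hc3
            rw [if_neg (by omega), Gf_hi_b t (i+1) (by omega), Gf_hi_b t i shi]

lemma G_wrap (t : ℕ) :
    ∃ d < 2*t+3, ∀ c < 2*t+3,
      Gf t 0 c = if c = d then !(Gf t (2^(2*t+3)-1) c) else Gf t (2^(2*t+3)-1) c := by
  have hL : (1:ℕ) ≤ 2^(2*t+1) := Nat.one_le_two_pow
  have hM : (2:ℕ)^(2*t+2) = 2*2^(2*t+1) := by ring
  have hN : (2:ℕ)^(2*t+3) = 4*2^(2*t+1) := by ring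
  have shi : 2^(2*t+2) ≤ 2^(2*t+3)-1 := by omega
  have e1 : (2^(2*t+3)-1-2^(2*t+2))/2 = 2^(2*t+1)-1 := by omega
  refine ⟨2*t+2, by omega, fun c hc => ?_⟩
  rcases Nat.lt_or_ge c (2*t+1) with hc1 | hc1
  · rw [if_neg (by omega), Gf_lo t 0 c (by positivity) hc1, Gf_hi t _ c shi hc1, e1,
      K_last t c hc1]
    simpa using K_zero t c hc1
  · rcases Nat.eq_or_lt_of_le hc1 with hc2 | hc2
    · rw [if_neg (by omega), ← hc2, Gf_lo_p t 0 (by positivity), Gf_hi_p t _ shi, e1,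
        decide_eq_decide]
      omega
    · have hc3 : c = 2*t+2 := by omega
      subst hc3
      rw [if_pos rfl, Gf_lo_b t 0 (by positivity), Gf_hi_b t _ shi]
      rfl

lemma G_comp_even (t i : ℕ) (hi : i < 2^(2*t+3)) (he : i % 2 = 0) (c : ℕ) (hc : c < 2*t+3) :
    Gf t ((i + 2^(2*t+2) + 1) % 2^(2*t+3)) c = !(Gf t i c) := by
  have hL : (1:ℕ) ≤ 2^(2*t+1) := Nat.one_le_two_pow
  have hM : (2:ℕ)^(2*t+2) = 2*2^(2*t+1) := by ring
  have hN : (2:ℕ)^(2*t+3) = 4*2^(2*t+1) := by ring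
  rcases Nat.lt_or_ge i (2^(2*t+2)) with s | s
  · have e0 : (i + 2^(2*t+2) + 1) % 2^(2*t+3) = i + 2^(2*t+2) + 1 :=
      Nat.mod_eq_of_lt (by omega)
    rw [e0]
    have s1 : 2^(2*t+2) ≤ i + 2^(2*t+2) + 1 := by omega
    have ej : (i + 2^(2*t+2) + 1 - 2^(2*t+2))/2 = i/2 := by omega
    rcases Nat.lt_or_ge c (2*t+1) with hc1 | hc1
    · rw [Gf_hi t _ c s1 hc1, Gf_lo t i c s hc1, ej]
    · rcases Nat.eq_or_lt_of_le hc1 with hc2 | hc2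
      · rw [← hc2, Gf_hi_p t _ s1, Gf_lo_p t i s, ej]
        by_cases hq : (i/2 + i) % 2 = 1
        · rw [decide_eq_true hq, decide_eq_false (by omega)]; rfl
        · rw [decide_eq_false hq, decide_eq_true (by omega)]; rfl
      · have hc3 : c = 2*t+2 := by omega
        subst hc3
        rw [Gf_hi_b t _ s1, Gf_lo_b t i s]
        rfl
  · have e0 : (i + 2^(2*t+2) + 1) % 2^(2*t+3) = i + 1 - 2^(2*t+2) := by
      have e1 : i + 2^(2*t+2) + 1 = 2^(2*t+3) + (i + 1 - 2^(2*t+2)) := by omega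
      rw [e1, Nat.add_mod_left, Nat.mod_eq_of_lt (by omega)]
    rw [e0]
    have s1 : i + 1 - 2^(2*t+2) < 2^(2*t+2) := by omega
    have ej : (i + 1 - 2^(2*t+2))/2 = (i - 2^(2*t+2))/2 := by omega
    rcases Nat.lt_or_ge c (2*t+1) with hc1 | hc1
    · rw [Gf_lo t _ c s1 hc1, Gf_hi t i c s hc1, ej]
      simp
    · rcases Nat.eq_or_lt_of_le hc1 with hc2 | hc2
      · rw [← hc2, Gf_lo_p t _ s1, Gf_hi_p t i s, ej]
        by_cases hq : ((i - 2^(2*t+2))/2 + i) % 2 = 1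
        · rw [decide_eq_true hq, decide_eq_false (by omega)]; rfl
        · rw [decide_eq_false hq, decide_eq_true (by omega)]; rfl
      · have hc3 : c = 2*t+2 := by omega
        subst hc3
        rw [Gf_lo_b t _ s1, Gf_hi_b t i s]
        rfl

lemma G_comp_odd (t i : ℕ) (hi : i < 2^(2*t+3)) (ho : i % 2 = 1) (c : ℕ) (hc : c < 2*t+3) :
    Gf t ((i + (2^(2*t+2) - 1)) % 2^(2*t+3)) c = !(Gf t i c) := by
  have hL : (1:ℕ) ≤ 2^(2*t+1) := Nat.one_le_two_pow
  have hM : (2:ℕ)^(2*t+2) = 2*2^(2*t+1) := by ring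
  have hN : (2:ℕ)^(2*t+3) = 4*2^(2*t+1) := by ring
  rcases Nat.lt_or_ge i (2^(2*t+2)) with s | s
  · have e0 : (i + (2^(2*t+2) - 1)) % 2^(2*t+3) = i + 2^(2*t+2) - 1 := by
      have e1 : i + (2^(2*t+2) - 1) = i + 2^(2*t+2) - 1 := by omega
      rw [e1]; exact Nat.mod_eq_of_lt (by omega)
    rw [e0]
    have s1 : 2^(2*t+2) ≤ i + 2^(2*t+2) - 1 := by omega
    have ej : (i + 2^(2*t+2) - 1 - 2^(2*t+2))/2 = i/2 := by omega
    rcases Nat.lt_or_ge c (2*t+1) with hc1 | hc1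
    · rw [Gf_hi t _ c s1 hc1, Gf_lo t i c s hc1, ej]
    · rcases Nat.eq_or_lt_of_le hc1 with hc2 | hc2
      · rw [← hc2, Gf_hi_p t _ s1, Gf_lo_p t i s, ej]
        by_cases hq : (i/2 + i) % 2 = 1
        · rw [decide_eq_true hq, decide_eq_false (by omega)]; rfl
        · rw [decide_eq_false hq, decide_eq_true (by omega)]; rfl
      · have hc3 : c = 2*t+2 := by omega
        subst hc3
        rw [Gf_hi_b t _ s1, Gf_lo_b t i s]
        rfl
  · have e0 : (i + (2^(2*t+2) - 1)) % 2^(2*t+3) = i - 2^(2*t+2) - 1 := by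
      have e1 : i + (2^(2*t+2) - 1) = 2^(2*t+3) + (i - 2^(2*t+2) - 1) := by omega
      rw [e1, Nat.add_mod_left, Nat.mod_eq_of_lt (by omega)]
    rw [e0]
    have s1 : i - 2^(2*t+2) - 1 < 2^(2*t+2) := by omega
    have ej : (i - 2^(2*t+2) - 1)/2 = (i - 2^(2*t+2))/2 := by omega
    rcases Nat.lt_or_ge c (2*t+1) with hc1 | hc1
    · rw [Gf_lo t _ c s1 hc1, Gf_hi t i c s hc1, ej]
      simp
    · rcases Nat.eq_or_lt_of_le hc1 with hc2 | hc2
      · rw [← hc2, Gf_lo_p t _ s1, Gf_hi_p t i s, ej]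
        by_cases hq : ((i - 2^(2*t+2))/2 + i) % 2 = 1
        · rw [decide_eq_true hq, decide_eq_false (by omega)]; rfl
        · rw [decide_eq_false hq, decide_eq_true (by omega)]; rfl
      · have hc3 : c = 2*t+2 := by omega
        subst hc3
        rw [Gf_lo_b t _ s1, Gf_hi_b t i s]
        rfl
lemma G_cyc (t i : ℕ) (hi : i < 2^(2*t+3)) :
    ∃ d < 2*t+3, ∀ c < 2*t+3,
      Gf t ((i+1) % 2^(2*t+3)) c = if c = d then !(Gf t i c) else Gf t i c := by
  rcases Nat.lt_or_ge (i+1) (2^(2*t+3)) with h | h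
  · rw [Nat.mod_eq_of_lt h]; exact G_step t i h
  · have e : i = 2^(2*t+3) - 1 := by omega
    have e2 : (i+1) % 2^(2*t+3) = 0 := by
      have : i + 1 = 2^(2*t+3) := by omega
      rw [this, Nat.mod_self]
    rw [e2, e]
    exact G_wrap t

open Fin.NatCast in
/-- for odd `n ≥ 3` there is a cyclic binary Gray code in which the complement
of each word occurs at separation `2^(n-1) + 1` or `2^(n-1) - 1`. -/
theorem exists_almost_complementary_gray_code_of_odd (n : ℕ) (hn : 3 ≤ n) (hodd : Odd n) :
    ∃ G : Fin (2 ^ n) → (Fin n → Bool),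
      Function.Bijective G ∧
      (∀ i : Fin (2 ^ n), hammingDist (G i) (G (i + 1)) = 1) ∧
      (∀ i : Fin (2 ^ n),
        G (i + ((2 ^ (n - 1) + 1 : ℕ) : Fin (2 ^ n))) = (fun j => ! (G i j)) ∨
        G (i + ((2 ^ (n - 1) - 1 : ℕ) : Fin (2 ^ n))) = (fun j => ! (G i j))) := by
  obtain ⟨t, rfl⟩ : ∃ t, n = 2*t+3 := by
    obtain ⟨k, hk⟩ := hodd
    exact ⟨(n-3)/2, by omega⟩
  have hL : (1:ℕ) ≤ 2^(2*t+1) := Nat.one_le_two_pow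
  have hM : (2:ℕ)^(2*t+2) = 2*2^(2*t+1) := by ring
  have hN : (2:ℕ)^(2*t+3) = 4*2^(2*t+1) := by ring
  set N := 2^(2*t+3) with hNdef
  have hN2 : 2 ≤ N := by omega
  have hexp : 2*t+3-1 = 2*t+2 := by omega
  refine ⟨fun i c => Gf t i.val c.val, ⟨?_, ?_⟩, ?_, ?_⟩
  · -- injective
    intro i i' h
    apply Fin.ext
    refine G_inj t i.val i'.val i.isLt i'.isLt (fun c hc => ?_)
    exact congrFun h ⟨c, hc⟩
  · -- surjective from injectivity and cardinality
    have hinj : Function.Injective (fun (i : Fin N) (c : Fin (2*t+3)) => Gf t i.val c.val) := by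
      intro i i' h
      apply Fin.ext
      refine G_inj t i.val i'.val i.isLt i'.isLt (fun c hc => ?_)
      exact congrFun h ⟨c, hc⟩
    have hcard : Fintype.card (Fin N) = Fintype.card (Fin (2*t+3) → Bool) := by
      simp [hNdef]
    exact (Fintype.bijective_iff_injective_and_card _).2 ⟨hinj, hcard⟩ |>.2
  · -- gray condition
    intro i
    obtain ⟨d, hd, hP⟩ := G_cyc t i.val i.isLt
    have hv : ((i + 1 : Fin N)).val = (i.val + 1) % N := by
      rw [Fin.val_add, Fin.val_one']
      rw [Nat.mod_eq_of_lt (show 1 < N by omega)]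
    have hfil : (Finset.univ.filter
        fun c : Fin (2*t+3) => Gf t i.val c.val ≠ Gf t (i+1 : Fin N).val c.val)
        = {(⟨d, hd⟩ : Fin (2*t+3))} := by
      ext c
      simp only [Finset.mem_filter, Finset.mem_univ, true_and, Finset.mem_singleton]
      have hPc := hP c.val c.isLt
      rw [hv] at *
      constructor
      · intro hne
        by_contra hcd
        have : c.val ≠ d := fun h => hcd (Fin.ext h)
        rw [if_neg this] at hPc
        rw [hv, hPc] at hne
        exact hne rfl
      · intro hcd
        subst hcd
        rw [if_pos rfl] at hPc
        rw [hv, hPc]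
        simp
    show (Finset.univ.filter _).card = 1
    rw [hfil, Finset.card_singleton]
  · -- complement condition
    intro i
    rcases Nat.even_or_odd i.val with ⟨u, hu⟩ | ⟨u, hu⟩
    · left
      funext c
      have hvc : ((2 ^ (2*t+3 - 1) + 1 : ℕ) : Fin N).val = 2^(2*t+2) + 1 := by
        rw [Fin.val_natCast, hexp]
        exact Nat.mod_eq_of_lt (by omega)
      have hv : ((i + ((2 ^ (2*t+3 - 1) + 1 : ℕ) : Fin N)).val)
          = (i.val + 2^(2*t+2) + 1) % N := by
        rw [Fin.val_add, hvc, ← Nat.add_assoc]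
      show Gf t _ c.val = !(Gf t i.val c.val)
      rw [hv]
      exact G_comp_even t i.val i.isLt (by omega) c.val c.isLt
    · right
      funext c
      have hvc : ((2 ^ (2*t+3 - 1) - 1 : ℕ) : Fin N).val = 2^(2*t+2) - 1 := by
        rw [Fin.val_natCast, hexp]
        exact Nat.mod_eq_of_lt (by omega)
      have hv : ((i + ((2 ^ (2*t+3 - 1) - 1 : ℕ) : Fin N)).val)
          = (i.val + (2^(2*t+2) - 1)) % N := by
        rw [Fin.val_add, hvc]
      show Gf t _ c.val = !(Gf t i.val c.val)
      rw [hv]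
      exact G_comp_odd t i.val i.isLt (by omega) c.val c.isLt
end

section
/- If n ≥ 3 is odd and q ≥ 2 is even, then there is no quasi-complementary Lee metric Gray code of q-ary n-tuples: there is no bijection G : Fin (q^n) → (Fin n → ZMod q) such that consecutive words (cyclically) have Lee distance exactly 1 and G((i + q^(n-1)) mod q^n) = G(i) + (1,1,…,1) for all i. -/
/-- Lee distance between two `q`-ary tuples. -/
def leeDist {q n : ℕ} (v w : Fin n → ZMod q) : ℕ :=
  ∑ j, min ((v j - w j).val) (q - (v j - w j).val)

/-- for odd `n ≥ 3` and even `q ≥ 2` there is no quasi-complementary Lee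
metric Gray code of `q`-ary `n`-tuples. -/
theorem no_quasi_complementary_lee_gray_code (n q : ℕ) (hn : 3 ≤ n) (hnodd : Odd n)
    (hq : 2 ≤ q) (hqeven : Even q) :
    ¬ ∃ G : Fin (q ^ n) → (Fin n → ZMod q),
      Function.Bijective G ∧
      (∀ i : Fin (q ^ n),
        leeDist (G i)
          (G ⟨(i.val + 1) % q ^ n, Nat.mod_lt _ (pow_pos (by omega) n)⟩) = 1) ∧
      (∀ i : Fin (q ^ n),
        G ⟨(i.val + q ^ (n - 1)) % q ^ n, Nat.mod_lt _ (pow_pos (by omega) n)⟩ =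
          fun j => G i j + 1) := by
  haveI : NeZero q := ⟨by omega⟩
  rintro ⟨G, -, h1, h2⟩
  have hN : 0 < q ^ n := pow_pos (by omega) n
  have hdvd : (2 : ℕ) ∣ q := hqeven.two_dvd
  -- parity map
  set par : (Fin n → ZMod q) → ZMod 2 := fun v => ∑ j, ((v j).val : ZMod 2) with hpar
  -- auxiliary: cast of min lee weight equals cast of val
  have hmin : ∀ x : ZMod q, ((min x.val (q - x.val) : ℕ) : ZMod 2) = (x.val : ZMod 2) := by
    intro x
    rcases min_cases x.val (q - x.val) with ⟨h, -⟩ | ⟨h, -⟩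
    · rw [h]
    · rw [h, Nat.cast_sub (le_of_lt (ZMod.val_lt x)),
        (ZMod.natCast_eq_zero_iff q 2).mpr hdvd, zero_sub, CharTwo.neg_eq]
  -- val cast is additive into ZMod 2
  have hvadd : ∀ x y : ZMod q, (((x + y).val : ℕ) : ZMod 2) = (x.val : ZMod 2) + (y.val : ZMod 2) := by
    intro x y
    rw [ZMod.val_add]
    have : ((x.val + y.val) % q : ℕ) % 2 = (x.val + y.val) % 2 :=
      Nat.mod_mod_of_dvd _ hdvd
    calc (((x.val + y.val) % q : ℕ) : ZMod 2)
        = ((((x.val + y.val) % q) % 2 : ℕ) : ZMod 2) := by rw [ZMod.natCast_mod]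
      _ = (((x.val + y.val) % 2 : ℕ) : ZMod 2) := by rw [this]
      _ = ((x.val + y.val : ℕ) : ZMod 2) := by rw [ZMod.natCast_mod]
      _ = _ := by push_cast; ring
  -- each step flips parity
  have hstep : ∀ i : Fin (q ^ n),
      par (G ⟨(i.val + 1) % q ^ n, Nat.mod_lt _ hN⟩) = par (G i) + 1 := by
    intro i
    set w := G ⟨(i.val + 1) % q ^ n, Nat.mod_lt _ hN⟩ with hw
    have key : par (G i) - par w = 1 := by
      have : par (G i) - par w = ∑ j, (((G i j - w j).val : ℕ) : ZMod 2) := by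
        rw [hpar, ← Finset.sum_sub_distrib]
        refine Finset.sum_congr rfl fun j _ => ?_
        have := hvadd (G i j - w j) (w j)
        rw [sub_add_cancel] at this
        rw [this]; ring
      rw [this]
      have : ∑ j, (((G i j - w j).val : ℕ) : ZMod 2)
          = ((∑ j, min ((G i j - w j).val) (q - (G i j - w j).val) : ℕ) : ZMod 2) := by
        push_cast
        exact Finset.sum_congr rfl fun j _ => (hmin _).symm
      rw [this]
      have := h1 i
      rw [leeDist] at this
      rw [this]
      norm_num
    have hneg : (-1 : ZMod 2) = 1 := by decide
    linear_combination -key + hneg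
  -- parity along the cycle
  have hiter : ∀ k : ℕ, par (G ⟨k % q ^ n, Nat.mod_lt _ hN⟩) =
      par (G ⟨0 % q ^ n, Nat.mod_lt _ hN⟩) + (k : ZMod 2) := by
    intro k
    induction k with
    | zero => simp
    | succ k ih =>
      have h' : par (G ⟨(k % q ^ n + 1) % q ^ n, Nat.mod_lt _ hN⟩) =
          par (G ⟨k % q ^ n, Nat.mod_lt _ hN⟩) + 1 :=
        hstep ⟨k % q ^ n, Nat.mod_lt _ hN⟩
      have hfin : (⟨(k % q ^ n + 1) % q ^ n, Nat.mod_lt _ hN⟩ : Fin (q ^ n)) =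
          ⟨(k + 1) % q ^ n, Nat.mod_lt _ hN⟩ := Fin.ext (Nat.mod_add_mod k (q ^ n) 1)
      rw [hfin] at h'
      rw [h', ih]
      push_cast
      ring
  -- evaluate at k = q^(n-1)
  have hqpow_even : ((q ^ (n - 1) : ℕ) : ZMod 2) = 0 := by
    rw [(ZMod.natCast_eq_zero_iff _ 2)]
    exact dvd_pow hdvd (by omega)
  have e1 : par (G ⟨q ^ (n - 1) % q ^ n, Nat.mod_lt _ hN⟩) =
      par (G ⟨0 % q ^ n, Nat.mod_lt _ hN⟩) := by
    rw [hiter (q ^ (n - 1)), hqpow_even, add_zero]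
  -- evaluate via complement condition
  have e2 : G ⟨(0 % q ^ n + q ^ (n - 1)) % q ^ n, Nat.mod_lt _ hN⟩ =
      fun j => G ⟨0 % q ^ n, Nat.mod_lt _ hN⟩ j + 1 :=
    h2 ⟨0 % q ^ n, Nat.mod_lt _ hN⟩
  have hfin2 : (⟨(0 % q ^ n + q ^ (n - 1)) % q ^ n, Nat.mod_lt _ hN⟩ : Fin (q ^ n)) =
      ⟨q ^ (n - 1) % q ^ n, Nat.mod_lt _ hN⟩ := Fin.ext (by simp)
  rw [hfin2] at e2
  rw [congrArg par e2] at e1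
  have parshift : par (fun j => G ⟨0 % q ^ n, Nat.mod_lt _ hN⟩ j + 1) =
      par (G ⟨0 % q ^ n, Nat.mod_lt _ hN⟩) + 1 := by
    rw [hpar]
    simp only
    have hone : (((1 : ZMod q)).val : ZMod 2) = 1 := by
      rw [ZMod.val_one_eq_one_mod, Nat.mod_eq_of_lt (by omega)]
      norm_num
    have hterm : ∀ j : Fin n, (((G ⟨0 % q ^ n, Nat.mod_lt _ hN⟩ j + 1).val : ℕ) : ZMod 2) =
        ((G ⟨0 % q ^ n, Nat.mod_lt _ hN⟩ j).val : ZMod 2) + 1 := fun j => by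
      rw [hvadd, hone]
    rw [Finset.sum_congr rfl fun j _ => hterm j, Finset.sum_add_distrib]
    congr 1
    simp only [Finset.sum_const, Finset.card_univ, Fintype.card_fin, nsmul_eq_mul, mul_one]
    rcases hnodd with ⟨m, hm⟩
    subst hm; push_cast
    linear_combination (m : ZMod 2) * (by decide : (2 : ZMod 2) = 0)
  rw [parshift] at e1
  have : (1 : ZMod 2) = 0 := by linear_combination e1
  exact one_ne_zero this
end

section
/- For every odd q ≥ 3 and every n ≥ 1, there exists a (non-cyclic) Lee metric Gray code of q-ary n-tuples starting at the all-zeros tuple and ending at the all-ones tuple: a bijection G : Fin (q^n) → (Fin n → ZMod q) with consecutive words at Lee distance exactly 1, G(0) = (0,…,0), and G(q^n - 1) = (1,…,1). -/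
lemma leeDist_self {q n : ℕ} [NeZero q] (v : Fin n → ZMod q) : leeDist v v = 0 := by
  simp [leeDist]

lemma leeDist_symm {q n : ℕ} [NeZero q] (v w : Fin n → ZMod q) : leeDist v w = leeDist w v := by
  unfold leeDist
  refine Finset.sum_congr rfl fun j _ => ?_
  have h : w j - v j = -(v j - w j) := by ring
  rw [h, ZMod.neg_val]
  have hv : (v j - w j).val < q := ZMod.val_lt _
  by_cases h0 : v j - w j = 0
  · simp [h0]
  · simp only [if_neg h0]
    omega

lemma leeDist_cons {q n : ℕ} (a b : ZMod q) (v w : Fin n → ZMod q) :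
    leeDist (Fin.cons a v) (Fin.cons b w) = min ((a-b).val) (q - (a-b).val) + leeDist v w := by
  simp [leeDist, Fin.sum_univ_succ]

/-- reflected position within a block -/
def grayIdx (m i : ℕ) : ℕ := if (i / m) % 2 = 0 then i % m else m - 1 - i % m

lemma grayIdx_lt {m : ℕ} (hm : 0 < m) (i : ℕ) : grayIdx m i < m := by
  unfold grayIdx
  have := Nat.mod_lt i hm
  split <;> omega

lemma aux_gray (q : ℕ) (hq : 3 ≤ q) (hodd : Odd q) : ∀ n : ℕ,
    ∃ G : Fin (q ^ n) → (Fin n → ZMod q),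
      Function.Bijective G ∧
      (∀ i : ℕ, (h : i + 1 < q ^ n) →
        leeDist (G ⟨i, Nat.lt_of_succ_lt h⟩) (G ⟨i + 1, h⟩) = 1) ∧
      G ⟨0, pow_pos (by omega) n⟩ = (fun _ => 0) ∧
      G ⟨q ^ n - 1, by have := pow_pos (show 0 < q by omega) n; omega⟩ = (fun _ => 1) := by
  haveI : NeZero q := ⟨by omega⟩
  haveI : Fact (1 < q) := ⟨by omega⟩
  intro n
  induction n with
  | zero =>
    refine ⟨fun _ _ => 0, ⟨fun a b _ => ?_, fun f => ⟨⟨0, by simp⟩, funext fun t => t.elim0⟩⟩,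
      ?_, funext fun t => t.elim0, funext fun t => t.elim0⟩
    · have ha := a.isLt
      have hb := b.isLt
      have hp := pow_zero q
      exact Fin.ext (by omega)
    · intro i h
      have hp := pow_zero q
      omega
  | succ n ih =>
    obtain ⟨G, hGbij, hGadj, hG0, hG1⟩ := ih
    have hqn : 0 < q ^ n := pow_pos (by omega) n
    have hpow : q ^ (n+1) = q * q ^ n := by rw [pow_succ, mul_comm]
    refine ⟨fun i => Fin.cons (-(((i : ℕ) / q ^ n : ℕ) : ZMod q))
        (G ⟨grayIdx (q ^ n) (i : ℕ), grayIdx_lt hqn _⟩), ?_, ?_, ?_, ?_⟩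
    · -- bijective
      rw [Fintype.bijective_iff_injective_and_card]
      refine ⟨?_, by simp [ZMod.card]⟩
      intro i j hij
      have hki : (i:ℕ) / q ^ n < q := by
        rw [Nat.div_lt_iff_lt_mul hqn]
        exact lt_of_lt_of_le i.isLt hpow.le
      have hkj : (j:ℕ) / q ^ n < q := by
        rw [Nat.div_lt_iff_lt_mul hqn]
        exact lt_of_lt_of_le j.isLt hpow.le
      have hhead : -((((i:ℕ) / q ^ n : ℕ) : ZMod q)) = -((((j:ℕ) / q ^ n : ℕ) : ZMod q)) := by
        have := congrFun hij 0
        simpa using this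
      have hk : (i:ℕ) / q ^ n = (j:ℕ) / q ^ n := by
        have h2 := neg_inj.mp hhead
        have := congrArg ZMod.val h2
        rwa [ZMod.val_cast_of_lt hki, ZMod.val_cast_of_lt hkj] at this
      have htail : G ⟨grayIdx (q ^ n) (i:ℕ), grayIdx_lt hqn _⟩
          = G ⟨grayIdx (q ^ n) (j:ℕ), grayIdx_lt hqn _⟩ := by
        funext t
        have := congrFun hij t.succ
        simpa using this
      have heq := hGbij.injective htail
      simp only [Fin.mk.injEq] at heq
      unfold grayIdx at heq
      rw [hk] at heq
      have hri : (i:ℕ) % q ^ n < q ^ n := Nat.mod_lt _ hqn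
      have hrj : (j:ℕ) % q ^ n < q ^ n := Nat.mod_lt _ hqn
      have hr : (i:ℕ) % q ^ n = (j:ℕ) % q ^ n := by
        split at heq <;> omega
      have hdm1 := Nat.div_add_mod (i:ℕ) (q ^ n)
      have hdm2 := Nat.div_add_mod (j:ℕ) (q ^ n)
      rw [hk, hr] at hdm1
      exact Fin.ext (by omega)
    · -- adjacency
      intro i h
      have hr : i % q ^ n < q ^ n := Nat.mod_lt _ hqn
      have hdm := Nat.div_add_mod i (q ^ n)
      rw [leeDist_cons]
      by_cases hcase : i % q ^ n + 1 < q ^ n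
      · -- same block
        have h1 : i + 1 = q ^ n * (i / q ^ n) + (i % q ^ n + 1) := by omega
        have hd : (i+1) / q ^ n = i / q ^ n := by
          rw [h1, Nat.mul_add_div hqn, Nat.div_eq_of_lt hcase]
          omega
        have hm : (i+1) % q ^ n = i % q ^ n + 1 := by
          rw [h1, Nat.mul_add_mod, Nat.mod_eq_of_lt hcase]
        have hab : -((((i:ℕ) / q ^ n : ℕ) : ZMod q)) - -((((i+1) / q ^ n : ℕ) : ZMod q)) = 0 := by
          rw [hd, sub_self]
        rw [hab]
        have hz : min (0 : ZMod q).val (q - (0:ZMod q).val) = 0 := by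
          simp [ZMod.val_zero]
        rw [hz, zero_add]
        by_cases hpar : (i / q ^ n) % 2 = 0
        · have e1 : (⟨grayIdx (q ^ n) i, grayIdx_lt hqn i⟩ : Fin (q ^ n))
              = ⟨i % q ^ n, hr⟩ := Fin.ext (by show grayIdx (q ^ n) i = i % q ^ n; unfold grayIdx; rw [if_pos hpar])
          have e2 : (⟨grayIdx (q ^ n) (i+1), grayIdx_lt hqn (i+1)⟩ : Fin (q ^ n))
              = ⟨i % q ^ n + 1, hcase⟩ := Fin.ext (by show grayIdx (q ^ n) (i+1) = i % q ^ n + 1; unfold grayIdx; rw [hd, hm, if_pos hpar])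
          rw [e1, e2]
          exact hGadj _ hcase
        · have hj : q ^ n - 1 - (i % q ^ n + 1) + 1 < q ^ n := by
            have hc := hcase
            have hq1 := hqn
            generalize q ^ n = P at hc hq1 ⊢
            omega
          have e1 : (⟨grayIdx (q ^ n) i, grayIdx_lt hqn i⟩ : Fin (q ^ n))
              = ⟨q ^ n - 1 - (i % q ^ n + 1) + 1, hj⟩ :=
            Fin.ext (by show grayIdx (q ^ n) i = q ^ n - 1 - (i % q ^ n + 1) + 1; unfold grayIdx; rw [if_neg hpar]; omega)
          have e2 : (⟨grayIdx (q ^ n) (i+1), grayIdx_lt hqn (i+1)⟩ : Fin (q ^ n))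
              = ⟨q ^ n - 1 - (i % q ^ n + 1), Nat.lt_of_succ_lt hj⟩ :=
            Fin.ext (by show grayIdx (q ^ n) (i+1) = q ^ n - 1 - (i % q ^ n + 1); unfold grayIdx; rw [hd, hm, if_neg hpar])
          rw [e1, e2, leeDist_symm]
          exact hGadj _ hj
      · -- block boundary
        have hrq : i % q ^ n + 1 = q ^ n := by omega
        have h1 : i + 1 = q ^ n * (i / q ^ n + 1) := by
          rw [Nat.mul_add, Nat.mul_one]
          omega
        have hd : (i+1) / q ^ n = i / q ^ n + 1 := by
          rw [h1, Nat.mul_div_cancel_left _ hqn]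
        have hm : (i+1) % q ^ n = 0 := by
          rw [h1, Nat.mul_mod_right]
        have hab : -((((i:ℕ) / q ^ n : ℕ) : ZMod q)) - -((((i+1) / q ^ n : ℕ) : ZMod q)) = 1 := by
          rw [hd]
          push_cast
          ring
        rw [hab, ZMod.val_one]
        have hone : min 1 (q - 1) = 1 := by omega
        rw [hone]
        have exy : (⟨grayIdx (q ^ n) i, grayIdx_lt hqn i⟩ : Fin (q ^ n))
            = ⟨grayIdx (q ^ n) (i+1), grayIdx_lt hqn (i+1)⟩ := by
          apply Fin.ext
          show grayIdx (q ^ n) i = grayIdx (q ^ n) (i+1)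
          unfold grayIdx
          rw [hd, hm]
          by_cases hpar : (i / q ^ n) % 2 = 0
          · rw [if_pos hpar, if_neg (by omega)]
            omega
          · rw [if_neg hpar, if_pos (by omega)]
            omega
        rw [exy, leeDist_self]
    · -- start
      have e0 : (⟨grayIdx (q ^ n) 0, grayIdx_lt hqn 0⟩ : Fin (q ^ n)) = ⟨0, hqn⟩ := by
        apply Fin.ext
        show grayIdx (q ^ n) 0 = 0
        unfold grayIdx
        simp
      refine Eq.trans (b := Fin.cons (-(((0 / q ^ n : ℕ) : ZMod q)))
        (G ⟨grayIdx (q ^ n) 0, grayIdx_lt hqn 0⟩)) rfl ?_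
      rw [e0, hG0]
      rw [Nat.zero_div]
      push_cast
      rw [neg_zero]
      exact funext fun t => Fin.cases rfl (fun s => rfl) t
    · -- end
      have hlast : q ^ (n+1) - 1 = q ^ n * (q - 1) + (q ^ n - 1) := by
        have h2 : q ^ (n+1) = q ^ n * q := pow_succ q n
        have h3 : q ^ n * (q - 1) = q ^ n * q - q ^ n := by rw [Nat.mul_sub, Nat.mul_one]
        have h4 : q ^ n ≤ q ^ n * q := Nat.le_mul_of_pos_right _ (by omega)
        rw [h2, h3]
        omega
      have hd : (q ^ (n+1) - 1) / q ^ n = q - 1 := by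
        rw [hlast, Nat.mul_add_div hqn, Nat.div_eq_of_lt (by omega)]
        omega
      have hm : (q ^ (n+1) - 1) % q ^ n = q ^ n - 1 := by
        rw [hlast, Nat.mul_add_mod, Nat.mod_eq_of_lt (by omega)]
      have hpar : (q - 1) % 2 = 0 := by
        obtain ⟨m, hm'⟩ := hodd
        omega
      have e0 : (⟨grayIdx (q ^ n) (q ^ (n+1) - 1), grayIdx_lt hqn _⟩ : Fin (q ^ n))
          = ⟨q ^ n - 1, by omega⟩ := by
        apply Fin.ext
        show grayIdx (q ^ n) (q ^ (n+1) - 1) = q ^ n - 1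
        unfold grayIdx
        rw [hd, hm, if_pos hpar]
      refine Eq.trans (b := Fin.cons (-((((q ^ (n+1) - 1) / q ^ n : ℕ) : ZMod q)))
        (G ⟨grayIdx (q ^ n) (q ^ (n+1) - 1), grayIdx_lt hqn _⟩)) rfl ?_
      rw [e0, hG1, hd]
      have hcast : (((q - 1 : ℕ)) : ZMod q) = -1 := by
        rw [Nat.cast_sub (by omega : 1 ≤ q)]
        simp
      rw [hcast, neg_neg]
      exact funext fun t => Fin.cases rfl (fun s => rfl) t

/-- for odd `q ≥ 3` and `n ≥ 1` there exists a Lee metric Gray code of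
`q`-ary `n`-tuples from the all-zeros tuple to the all-ones tuple. -/
theorem exists_lee_gray_path_odd_q (n q : ℕ) (hn : 1 ≤ n) (hq : 3 ≤ q) (hqodd : Odd q) :
    ∃ G : Fin (q ^ n) → (Fin n → ZMod q),
      Function.Bijective G ∧
      (∀ i : ℕ, (h : i + 1 < q ^ n) →
        leeDist (G ⟨i, by omega⟩) (G ⟨i + 1, h⟩) = 1) ∧
      G ⟨0, pow_pos (by omega) n⟩ = (fun _ => 0) ∧
      G ⟨q ^ n - 1, by have := pow_pos (show 0 < q by omega) n; omega⟩ = (fun _ => 1) := by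
  exact aux_gray q hq hqodd n
end

section
/- If q ≥ 4 is even and n ≥ 3 is odd, then there is no bijection G : Fin (q^n) → (Fin n → ZMod q) such that consecutive words (cyclically) have Lee distance exactly 1 and for every i the word G(i) + (1,1,…,1) occurs at position i + q^(n-1) + 1 or i + q^(n-1) - 1 (mod q^n). -/
namespace NoAQC


def IsUnitVec (q n : ℕ) (v : Fin n → ZMod q) : Prop :=
  ∃ c, (v c = 1 ∨ v c = -1) ∧ ∀ c', c' ≠ c → v c' = 0

lemma two_ne_zero' {q : ℕ} (hq : 4 ≤ q) : (2 : ZMod q) ≠ 0 := by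
  haveI : NeZero q := ⟨by omega⟩
  intro h
  have h2 : ((2 : ℕ) : ZMod q) = 0 := by exact_mod_cast h
  rw [ZMod.natCast_eq_zero_iff] at h2
  have := Nat.le_of_dvd (by norm_num) h2
  omega

lemma one_ne_zero' {q : ℕ} (hq : 4 ≤ q) : (1 : ZMod q) ≠ 0 := by
  haveI : NeZero q := ⟨by omega⟩
  intro h
  have h2 : ((1 : ℕ) : ZMod q) = 0 := by exact_mod_cast h
  rw [ZMod.natCast_eq_zero_iff] at h2
  have := Nat.le_of_dvd (by norm_num) h2
  omega

lemma neg_one_ne_zero' {q : ℕ} (hq : 4 ≤ q) : (-1 : ZMod q) ≠ 0 := by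
  intro h
  have : (1 : ZMod q) = 0 := by
    have := congrArg (fun x => -x) h
    simpa using this
  exact one_ne_zero' hq this

lemma one_ne_neg_one' {q : ℕ} (hq : 4 ≤ q) : (1 : ZMod q) ≠ -1 := by
  intro h
  apply two_ne_zero' hq
  linear_combination h

lemma two_mul_unit_ne_zero {q : ℕ} (hq : 4 ≤ q) {a : ZMod q} (ha : a = 1 ∨ a = -1) :
    2 * a ≠ 0 := by
  rcases ha with h | h <;> subst h
  · simpa using two_ne_zero' hq
  · intro h
    apply two_ne_zero' hq
    have := congrArg (fun x => -x) h
    simpa using this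

lemma unit_val_ne_zero {q : ℕ} (hq : 4 ≤ q) {a : ZMod q} (ha : a = 1 ∨ a = -1) : a ≠ 0 := by
  rcases ha with h | h <;> subst h
  · exact one_ne_zero' hq
  · exact neg_one_ne_zero' hq

lemma unitvec_of_leeDist {q n : ℕ} (hq : 4 ≤ q) {v w : Fin n → ZMod q}
    (h : leeDist v w = 1) : IsUnitVec q n (fun j => w j - v j) := by
  haveI : NeZero q := ⟨by omega⟩
  unfold leeDist at h
  set f : Fin n → ℕ := fun j => min ((v j - w j).val) (q - (v j - w j).val) with hf
  obtain ⟨c, _, hc⟩ := Finset.exists_ne_zero_of_sum_ne_zero (s := Finset.univ) (f := f)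
    (by rw [h]; exact one_ne_zero)
  have hle : f c ≤ 1 := h ▸ Finset.single_le_sum (fun _ _ => Nat.zero_le _) (Finset.mem_univ c)
  have hfc : f c = 1 := by omega
  have hrest : ∀ j, j ≠ c → f j = 0 := by
    intro j hj
    have h1 : ∑ x ∈ Finset.univ.erase c, f x + f c = 1 := by
      rw [Finset.sum_erase_add _ _ (Finset.mem_univ c)]; exact h
    have h2 : ∑ x ∈ Finset.univ.erase c, f x = 0 := by omega
    have := (Finset.sum_eq_zero_iff).mp h2 j (by simp [hj])
    exact this
  have hvlt : ∀ j, (v j - w j).val < q := fun j => ZMod.val_lt _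
  have hzero : ∀ j, j ≠ c → w j - v j = 0 := by
    intro j hj
    have h0 : f j = 0 := hrest j hj
    have : (v j - w j).val = 0 := by
      have := hvlt j
      simp only [hf] at h0
      omega
    have hv0 : v j - w j = 0 := (ZMod.val_eq_zero _).mp this
    have : v j = w j := sub_eq_zero.mp hv0
    rw [this, sub_self]
  have hcv : (v c - w c).val = 1 ∨ (v c - w c).val = q - 1 := by
    have := hvlt c
    simp only [hf] at hfc
    omega
  have hcast : ∀ a : ZMod q, ((a.val : ℕ) : ZMod q) = a := fun a => ZMod.natCast_rightInverse a
  rcases hcv with h1 | h1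
  · refine ⟨c, Or.inr ?_, hzero⟩
    have : v c - w c = 1 := by
      have := hcast (v c - w c)
      rw [h1] at this
      simpa using this.symm
    simp only []
    have : w c - v c = -(v c - w c) := by ring
    rw [this]
    rw [show v c - w c = 1 from by
      have h2 := hcast (v c - w c); rw [h1] at h2; simpa using h2.symm]
  · refine ⟨c, Or.inl ?_, hzero⟩
    have h2 := hcast (v c - w c)
    rw [h1] at h2
    have h3 : ((q - 1 : ℕ) : ZMod q) = -1 := by
      have : ((q - 1 : ℕ) : ZMod q) = (q : ℕ) - (1 : ℕ) := by
        push_cast [Nat.cast_sub (show 1 ≤ q by omega)]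
        ring
      rw [this]
      simp [ZMod.natCast_self]
    have : v c - w c = -1 := by rw [← h2, h3]
    simp only []
    have h4 : w c - v c = -(v c - w c) := by ring
    rw [h4, this]
    ring



/-- step vector of a sequence of words -/
def dvec {q n : ℕ} (g : ℕ → Fin n → ZMod q) (k : ℕ) (j : Fin n) : ZMod q :=
  g (k + 1) j - g k j

lemma telescope {q n : ℕ} (g : ℕ → Fin n → ZMod q) (k m : ℕ) (j : Fin n) :
    g (k + m) j = g k j + ∑ t ∈ Finset.range m, dvec g (k + t) j := by
  induction m with
  | zero => simp
  | succ m ih =>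
    rw [Finset.sum_range_succ]
    simp only [dvec, show k + (m+1) = (k + m) + 1 from rfl] at ih ⊢
    linear_combination ih

lemma sum_odd_part {M : Type*} [AddCommMonoid M] (f : ℕ → M) (m : ℕ)
    (h0 : ∀ a, f (2 * a) = 0) :
    ∑ t ∈ Finset.range (2 * m + 1), f t = ∑ a ∈ Finset.range m, f (2 * a + 1) := by
  induction m with
  | zero => simpa using h0 0
  | succ m ih =>
    have h1 : 2 * (m + 1) + 1 = (2 * m + 1) + 1 + 1 := by omega
    rw [h1, Finset.sum_range_succ, Finset.sum_range_succ, ih, Finset.sum_range_succ]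
    have h2 : 2 * m + 1 + 1 = 2 * (m + 1) := by omega
    rw [h2, h0 (m + 1)]
    simp

lemma iterAdd {q n : ℕ} (g : ℕ → Fin n → ZMod q) (d : ℕ)
    (h : ∀ k j, g (k + d) j = g k j + 1) :
    ∀ m k j, g (k + m * d) j = g k j + (m : ZMod q) := by
  intro m
  induction m with
  | zero => intro k j; simp
  | succ m ih =>
    intro k j
    have h1 : k + (m + 1) * d = (k + m * d) + d := by ring
    rw [h1, h _ j, ih k j]
    push_cast
    ring

lemma key (q n : ℕ) (hq : 4 ≤ q) (hqe : Even q) (hn2 : 2 ≤ n) (hno : Odd n)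
    (g : ℕ → Fin n → ZMod q)
    (hu : ∀ k, IsUnitVec q n (dvec g k))
    (hne : ∀ k, ¬ ∀ j, g (k + 2) j = g k j)
    (hE : ∀ k, k % 2 = 0 → ∀ j, g (k + q ^ (n-1) + 1) j = g k j + 1)
    (hM : ∀ k, k % 2 = 0 → ∀ j, g (k + q ^ (n-1)) j = g (k + 1) j + 1) : False := by
  classical
  obtain ⟨m2, hm2⟩ : ∃ m, q ^ (n-1) = 2 * m := by
    obtain ⟨a, ha⟩ := hqe
    refine ⟨q ^ (n-2) * a, ?_⟩
    rw [show n - 1 = (n-2)+1 from by omega, pow_succ, ha]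
    ring
  set s := q ^ (n-1) with hs
  let C : ℕ → Fin n := fun k => (hu k).choose
  have hC1 : ∀ k, dvec g k (C k) = 1 ∨ dvec g k (C k) = -1 := fun k => (hu k).choose_spec.1
  have hC2 : ∀ k, ∀ c', c' ≠ C k → dvec g k c' = 0 := fun k => (hu k).choose_spec.2
  have hCne : ∀ k, dvec g k (C k) ≠ 0 := fun k => unit_val_ne_zero hq (hC1 k)
  have hUc : ∀ k c, dvec g k c ≠ 0 → c = C k := by
    intro k c h; by_contra hcc; exact h (hC2 k c hcc)
  have K1 : ∀ k, k % 2 = 0 → ∀ j, dvec g (k + s) j = - dvec g k j := by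
    intro k hk j
    have h1 := hE k hk j
    have h2 := hM k hk j
    simp only [dvec]
    linear_combination h1 - h2
  have K2 : ∀ k, k % 2 = 0 → ∀ j,
      dvec g (k + s + 1) j = dvec g k j + dvec g (k+1) j + dvec g (k+2) j := by
    intro k hk j
    have h1 := hE k hk j
    have h2 := hM (k+2) (by omega) j
    have e1 : k + 2 + s = k + s + 1 + 1 := by omega
    rw [e1] at h2
    have e2 : k + 2 + 1 = k + 3 := rfl
    rw [e2] at h2
    simp only [dvec]
    linear_combination h2 - h1
  have K3 : ∀ k, ¬ ∀ j, dvec g (k+1) j = - dvec g k j := by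
    intro k h
    apply hne k
    intro j
    have h1 := h j
    simp only [dvec] at h1
    linear_combination h1
  have same : ∀ k1 k2, C k1 = C k2 →
      (∀ j, dvec g k1 j = dvec g k2 j) ∨ (∀ j, dvec g k1 j = - dvec g k2 j) := by
    intro k1 k2 hcc
    have haux : ∀ j, j ≠ C k2 → dvec g k1 j = 0 ∧ dvec g k2 j = 0 := by
      intro j hj
      exact ⟨hC2 k1 j (by rw [hcc]; exact hj), hC2 k2 j hj⟩
    have hv1 : dvec g k1 (C k2) = 1 ∨ dvec g k1 (C k2) = -1 := by
      rw [← hcc]; exact hC1 k1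
    rcases hv1 with h1 | h1 <;> rcases hC1 k2 with h2 | h2
    · left; intro j
      by_cases hj : j = C k2
      · subst hj; rw [h1, h2]
      · rw [(haux j hj).1, (haux j hj).2]
    · right; intro j
      by_cases hj : j = C k2
      · subst hj; rw [h1, h2]; try ring
      · rw [(haux j hj).1, (haux j hj).2]; try ring
    · right; intro j
      by_cases hj : j = C k2
      · subst hj; rw [h1, h2]; try ring
      · rw [(haux j hj).1, (haux j hj).2]; try ring
    · left; intro j
      by_cases hj : j = C k2
      · subst hj; rw [h1, h2]
      · rw [(haux j hj).1, (haux j hj).2]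
  have K4 : ∀ k, k % 2 = 0 →
      C (k + 2) = C k ∧
      (C (k+1) = C k → ∀ j, dvec g (k+2) j = dvec g k j) ∧
      (C (k+1) ≠ C k → ∀ j, dvec g (k+2) j = - dvec g k j) := by
    intro k hk
    have hT := K2 k hk
    have hvne := K3 k
    have hwne : ¬ ∀ j, dvec g (k+2) j = - dvec g (k+1) j := K3 (k+1)
    by_cases hcv : C (k+1) = C k
    · have hvu : ∀ j, dvec g (k+1) j = dvec g k j := by
        rcases same (k+1) k hcv with h | h
        · exact h
        · exact absurd h hvne
      have hwcu : C (k+2) = C k := by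
        by_contra hwcu
        have h1 : dvec g (k + s + 1) (C (k+2)) = dvec g (k+2) (C (k+2)) := by
          rw [hT (C (k+2)), hC2 k _ hwcu, hvu (C (k+2)), hC2 k _ hwcu]; try ring
        have h2 : C (k+2) = C (k + s + 1) := hUc _ _ (by rw [h1]; exact hCne (k+2))
        have h3 : dvec g (k + s + 1) (C k) = 2 * dvec g k (C k) := by
          rw [hT (C k), hvu (C k), hC2 (k+2) _ (fun h => hwcu h.symm)]; try ring
        have h4 : C k = C (k + s + 1) := hUc _ _ (by
          rw [h3]; exact two_mul_unit_ne_zero hq (hC1 k))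
        exact hwcu (h2.trans h4.symm)
      refine ⟨hwcu, fun _ => ?_, fun hcon => absurd hcv hcon⟩
      rcases same (k+2) k hwcu with h | h
      · exact h
      · exfalso; apply hwne
        intro j; rw [h j, hvu j]
    · have hvcu : dvec g (k+1) (C k) = 0 := hC2 (k+1) _ (fun h => hcv h.symm)
      have hucv : dvec g k (C (k+1)) = 0 := hC2 k _ hcv
      have hwcu : C (k+2) = C k := by
        by_cases hwv : C (k+2) = C (k+1)
        · exfalso
          rcases same (k+2) (k+1) hwv with h | h
          · have h1 : dvec g (k+s+1) (C (k+1)) = 2 * dvec g (k+1) (C (k+1)) := by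
              rw [hT (C (k+1)), hucv, h (C (k+1))]; try ring
            have h2 : C (k+1) = C (k+s+1) := hUc _ _ (by
              rw [h1]; exact two_mul_unit_ne_zero hq (hC1 (k+1)))
            have h3 : dvec g (k+s+1) (C k) = dvec g k (C k) := by
              rw [hT (C k), hvcu, h (C k), hvcu]; try ring
            have h4 : C k = C (k+s+1) := hUc _ _ (by rw [h3]; exact hCne k)
            exact hcv (h2.trans h4.symm)
          · exact hwne h
        · by_contra hwcu
          have h1 : dvec g (k+s+1) (C (k+2)) = dvec g (k+2) (C (k+2)) := by
            rw [hT (C (k+2)), hC2 k _ hwcu, hC2 (k+1) _ hwv]; try ring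
          have h2 : C (k+2) = C (k+s+1) := hUc _ _ (by rw [h1]; exact hCne (k+2))
          have h3 : dvec g (k+s+1) (C k) = dvec g k (C k) := by
            rw [hT (C k), hvcu, hC2 (k+2) _ (fun h => hwcu h.symm)]; try ring
          have h4 : C k = C (k+s+1) := hUc _ _ (by rw [h3]; exact hCne k)
          exact hwcu (h2.trans h4.symm)
      refine ⟨hwcu, fun hcon => absurd hcon hcv, fun _ => ?_⟩
      rcases same (k+2) k hwcu with h | h
      · exfalso
        have h1 : dvec g (k+s+1) (C k) = 2 * dvec g k (C k) := by
          rw [hT (C k), hvcu, h (C k)]; try ring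
        have h2 : C k = C (k+s+1) := hUc _ _ (by
          rw [h1]; exact two_mul_unit_ne_zero hq (hC1 k))
        have h3 : dvec g (k+s+1) (C (k+1)) = dvec g (k+1) (C (k+1)) := by
          rw [hT (C (k+1)), hucv, h (C (k+1)), hucv]; try ring
        have h4 : C (k+1) = C (k+s+1) := hUc _ _ (by rw [h3]; exact hCne (k+1))
        exact hcv (h4.trans h2.symm)
      · exact h
  have K5 : ∀ m, C (2 * m) = C 0 := by
    intro m
    induction m with
    | zero => norm_num
    | succ m ih =>
      have e : 2 * (m+1) = (2*m) + 2 := by omega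
      rw [e, (K4 (2*m) (by omega)).1, ih]
  have K6 : ∀ m j, dvec g (2 * m) j =
      (∏ t ∈ Finset.range m, if C (2*t+1) = C 0 then (1 : ZMod q) else -1) * dvec g 0 j := by
    intro m
    induction m with
    | zero => intro j; simp
    | succ m ih =>
      intro j
      have hK := K4 (2*m) (by omega)
      have hC5 : C (2*m) = C 0 := K5 m
      rw [Finset.prod_range_succ]
      by_cases hc : C (2*m+1) = C 0
      · have h1 := hK.2.1 (by rw [hC5]; exact hc) j
        rw [show 2*m + 2 = 2*(m+1) from by omega] at h1
        rw [h1, ih j, if_pos hc]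
        ring
      · have h1 := hK.2.2 (by rw [hC5]; exact hc) j
        rw [show 2*m + 2 = 2*(m+1) from by omega] at h1
        rw [h1, ih j, if_neg hc]
        ring
  have K7 : (∏ t ∈ Finset.range m2, if C (2*t+1) = C 0 then (1 : ZMod q) else -1) = -1 := by
    have h1 := K1 0 (by omega) (C 0)
    have h2 := K6 m2 (C 0)
    rw [show (0:ℕ) + s = 2 * m2 from by omega] at h1
    rw [h1] at h2
    rcases hC1 0 with h | h <;> rw [h] at h2
    · linear_combination -h2
    · linear_combination h2
  have PS : ∀ m, ((∏ t ∈ Finset.range m, if C (2*t+1) = C 0 then (1:ZMod q) else -1) = 1 ∧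
        (∑ t ∈ Finset.range m, if C (2*t+1) = C 0 then (0:ZMod 2) else 1) = 0) ∨
      ((∏ t ∈ Finset.range m, if C (2*t+1) = C 0 then (1:ZMod q) else -1) = -1 ∧
        (∑ t ∈ Finset.range m, if C (2*t+1) = C 0 then (0:ZMod 2) else 1) = 1) := by
    intro m
    induction m with
    | zero => left; simp
    | succ m ih =>
      rw [Finset.prod_range_succ, Finset.sum_range_succ]
      by_cases hc : C (2*m+1) = C 0
      · rw [if_pos hc, if_pos hc]
        rcases ih with ⟨h1, h2⟩ | ⟨h1, h2⟩
        · left; rw [h1, h2]; exact ⟨by ring, by ring⟩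
        · right; rw [h1, h2]; exact ⟨by ring, by ring⟩
      · rw [if_neg hc, if_neg hc]
        rcases ih with ⟨h1, h2⟩ | ⟨h1, h2⟩
        · right; rw [h1, h2]; exact ⟨by ring, by ring⟩
        · left; rw [h1, h2]; exact ⟨by ring, by decide⟩
  have sum1 : (∑ t ∈ Finset.range m2, if C (2*t+1) = C 0 then (0:ZMod 2) else 1) = 1 := by
    rcases PS m2 with ⟨h1, _⟩ | ⟨_, h2⟩
    · exact absurd (h1.symm.trans K7) (one_ne_neg_one' hq)
    · exact h2
  have K8 : ∀ j, (∑ t ∈ Finset.range (s+1), dvec g t j) = 1 := by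
    intro j
    have h1 := telescope g 0 (s+1) j
    have h2 := hE 0 (by omega) j
    simp only [Nat.zero_add] at h1 h2
    exact add_left_cancel (h1.symm.trans h2)
  have hdvd : (2:ℕ) ∣ q := hqe.two_dvd
  set π : ZMod q →+* ZMod 2 := ZMod.castHom hdvd (ZMod 2) with hπ
  have WP : ∀ c', c' ≠ C 0 →
      (∑ a ∈ Finset.range m2, if C (2*a+1) = c' then (1:ZMod 2) else 0) = 1 := by
    intro c' hc'
    have h1 := K8 c'
    have h2 : (∑ t ∈ Finset.range (s+1), π (dvec g t c')) = 1 := by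
      rw [← map_sum, h1, map_one]
    have h0 : ∀ a, π (dvec g (2*a) c') = 0 := by
      intro a
      have hC5 : C (2*a) = C 0 := K5 a
      have hz : dvec g (2*a) c' = 0 := hC2 _ _ (by rw [hC5]; exact hc')
      rw [hz, map_zero]
    have h3 : (∑ a ∈ Finset.range m2, π (dvec g (2*a+1) c')) = 1 := by
      rw [← sum_odd_part (fun t => π (dvec g t c')) m2 h0,
        show 2 * m2 + 1 = s + 1 from by omega]
      exact h2
    have h4 : (∑ a ∈ Finset.range m2, if C (2*a+1) = c' then (1:ZMod 2) else 0)
        = ∑ a ∈ Finset.range m2, π (dvec g (2*a+1) c') := by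
      apply Finset.sum_congr rfl
      intro a _
      by_cases hca : C (2*a+1) = c'
      · rw [if_pos hca]
        rcases hC1 (2*a+1) with h | h
        · rw [hca] at h; rw [h, map_one]
        · rw [hca] at h; rw [h, map_neg, map_one]; decide
      · rw [if_neg hca]
        have hz : dvec g (2*a+1) c' = 0 := hC2 _ _ (fun h => hca h.symm)
        rw [hz, map_zero]
    rw [h4]
    exact h3
  have swap := Finset.sum_comm (s := Finset.univ.erase (C 0)) (t := Finset.range m2)
      (f := fun c' a => if C (2*a+1) = c' then (1:ZMod 2) else 0)
  have hXa : (∑ c' ∈ Finset.univ.erase (C 0), ∑ a ∈ Finset.range m2,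
      if C (2*a+1) = c' then (1:ZMod 2) else 0) = 0 := by
    rw [Finset.sum_congr rfl (fun c' hc' => WP c' (Finset.ne_of_mem_erase hc'))]
    rw [Finset.sum_const, Finset.card_erase_of_mem (Finset.mem_univ _), Finset.card_univ,
      Fintype.card_fin]
    obtain ⟨t, ht⟩ := hno
    rw [show n - 1 = 2*t from by omega]
    rw [nsmul_eq_mul, mul_one]
    have hc : ((2*t : ℕ) : ZMod 2) = ((2:ℕ):ZMod 2) * t := by push_cast; ring
    rw [hc, show ((2:ℕ) : ZMod 2) = 0 from by decide, zero_mul]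
  have hXb : (∑ a ∈ Finset.range m2, ∑ c' ∈ Finset.univ.erase (C 0),
      if C (2*a+1) = c' then (1:ZMod 2) else 0) = 1 := by
    have h5 : ∀ a ∈ Finset.range m2,
        (∑ c' ∈ Finset.univ.erase (C 0), if C (2*a+1) = c' then (1:ZMod 2) else 0)
          = if C (2*a+1) = C 0 then (0:ZMod 2) else 1 := by
      intro a _
      rw [Finset.sum_ite_eq (Finset.univ.erase (C 0)) (C (2*a+1)) (fun _ => (1:ZMod 2))]
      by_cases hca : C (2*a+1) = C 0
      · rw [if_neg (fun hmem => (Finset.mem_erase.mp hmem).1 hca), if_pos hca]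
      · rw [if_pos (Finset.mem_erase.mpr ⟨hca, Finset.mem_univ _⟩), if_neg hca]
    rw [Finset.sum_congr rfl h5]
    exact sum1
  rw [swap] at hXa
  rw [hXa] at hXb
  exact absurd hXb (by decide)


end NoAQC

open NoAQC in
/-- for even `q ≥ 4` and odd `n ≥ 3` there is no cyclic Lee metric Gray code
in which `G(i) + (1,…,1)` always occurs at separation `q^(n-1) ± 1`. -/
theorem no_almost_quasi_complementary_lee_gray_code (n q : ℕ) (hn : 3 ≤ n) (hnodd : Odd n)
    (hq : 4 ≤ q) (hqeven : Even q) :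
    ¬ ∃ G : Fin (q ^ n) → (Fin n → ZMod q),
      Function.Bijective G ∧
      (∀ i : Fin (q ^ n),
        leeDist (G i)
          (G ⟨(i.val + 1) % q ^ n, Nat.mod_lt _ (pow_pos (by omega) n)⟩) = 1) ∧
      (∀ i : Fin (q ^ n),
        G ⟨(i.val + (q ^ (n - 1) + 1)) % q ^ n, Nat.mod_lt _ (pow_pos (by omega) n)⟩ =
            (fun j => G i j + 1) ∨
        G ⟨(i.val + (q ^ (n - 1) - 1)) % q ^ n, Nat.mod_lt _ (pow_pos (by omega) n)⟩ =
            (fun j => G i j + 1)) := by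
  rintro ⟨G, hbij, hlee, hqc⟩
  have hq0 : 0 < q := by omega
  have hN0 : 0 < q ^ n := pow_pos hq0 n
  -- basic numeric facts
  have hqq : q * q ≤ q ^ n := by
    calc q * q = q ^ 2 := (sq q).symm
    _ ≤ q ^ n := Nat.pow_le_pow_right (by omega) (by omega)
  have hqltqq : q < q * q := by nlinarith
  have hqN : q < q ^ n := lt_of_lt_of_le hqltqq hqq
  have hN2 : 2 < q ^ n := by omega
  have hS1 : 1 ≤ q ^ (n-1) := Nat.one_le_pow _ _ hq0
  have hqS : q * q ^ (n-1) = q ^ n := by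
    rw [← pow_succ' q (n-1)]
    congr 1
    omega
  have hNeven : ∃ w, q ^ n = 2 * w := by
    obtain ⟨a, ha⟩ := hqeven
    exact ⟨a * q ^ (n-1), by rw [← hqS, ha]; ring⟩
  -- the unrolled code
  set g : ℕ → Fin n → ZMod q := fun k => G ⟨k % q ^ n, Nat.mod_lt _ hN0⟩ with hgdef
  have hginj : ∀ a b, g a = g b → a % q ^ n = b % q ^ n := by
    intro a b h
    simp only [hgdef] at h
    have := hbij.1 h
    simpa using congrArg Fin.val this
  have hdvd2 : ∀ a b : ℕ, a % q ^ n = (a + 2) % q ^ n → False := by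
    intro a b h
    have h2 : q ^ n ∣ (a + 2) - a := (Nat.modEq_iff_dvd' (by omega)).mp h
    have h3 : (a + 2) - a = 2 := by omega
    rw [h3] at h2
    have := Nat.le_of_dvd (by omega) h2
    omega
  have hne : ∀ k, ¬ ∀ j, g (k + 2) j = g k j := by
    intro k h
    apply hdvd2 k k
    exact (hginj k (k+2) (funext (fun j => (h j).symm))) 
  have hstep : ∀ k, leeDist (g k) (g (k+1)) = 1 := by
    intro k
    have h := hlee ⟨k % q ^ n, Nat.mod_lt _ hN0⟩
    have e : (k % q ^ n + 1) % q ^ n = (k + 1) % q ^ n := Nat.mod_add_mod k (q ^ n) 1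
    simpa only [hgdef, e] using h
  have hu : ∀ k, IsUnitVec q n (dvec g k) := by
    intro k
    exact unitvec_of_leeDist hq (hstep k)
  -- the two partner predicates
  set S := q ^ (n-1) with hSdef
  have hqcg : ∀ k, (∀ j, g (k + S + 1) j = g k j + 1) ∨ (∀ j, g (k + S - 1) j = g k j + 1) := by
    intro k
    have h := hqc ⟨k % q ^ n, Nat.mod_lt _ hN0⟩
    have e1 : (k % q ^ n + (S + 1)) % q ^ n = (k + S + 1) % q ^ n := by
      rw [Nat.mod_add_mod, ← Nat.add_assoc]
    have e2 : (k % q ^ n + (S - 1)) % q ^ n = (k + S - 1) % q ^ n := by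
      rw [Nat.mod_add_mod]
      congr 1
      omega
    rcases h with h | h
    · left
      intro j
      have := congrFun h j
      simpa only [hgdef, e1] using this
    · right
      intro j
      have := congrFun h j
      simpa only [hgdef, e2] using this
  -- E and Mo predicates
  have F3 : ∀ k, (∀ j, g (k + S + 1) j = g k j + 1) → (∀ j, g (k + 2 + S - 1) j = g (k+2) j + 1) → False := by
    intro k hE hM
    have e : k + 2 + S - 1 = k + S + 1 := by omega
    rw [e] at hM
    apply hdvd2 k k
    apply hginj
    funext j
    have h1 := hE j
    have h2 := hM j
    have : g k j + 1 = g (k + 2) j + 1 := by rw [← h1, ← h2]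
    exact (add_right_cancel this)
  have PE : ∀ k, (∀ j, g (k + S + 1) j = g k j + 1) → (∀ j, g (k + 2 + S + 1) j = g (k+2) j + 1) := by
    intro k hE
    rcases hqcg (k+2) with h | h
    · exact h
    · exact absurd h (fun h' => F3 k hE h')
  have PE' : ∀ k t, (∀ j, g (k + S + 1) j = g k j + 1) → (∀ j, g ((k + 2*t) + S + 1) j = g (k + 2*t) j + 1) := by
    intro k t
    induction t with
    | zero =>
      intro h j
      have e : k + 2*0 = k := by omega
      rw [e]
      exact h j
    | succ t ih =>
      intro h
      have h1 := PE (k + 2*t) (ih h)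
      have e : k + 2*t + 2 = k + 2*(t+1) := by omega
      rw [e] at h1
      exact h1
  have hgper : ∀ k m, g (k + m * q ^ n) = g k := by
    intro k m
    simp only [hgdef]
    exact congrArg G (Fin.ext (Nat.add_mul_mod_self_right k m (q ^ n)))
  have EperM : ∀ m k, (∀ j, g ((k + m * q ^ n) + S + 1) j = g (k + m * q ^ n) j + 1) →
      (∀ j, g (k + S + 1) j = g k j + 1) := by
    intro m k h j
    have e : k + m * q ^ n + S + 1 = (k + S + 1) + m * q ^ n := by omega
    rw [e, hgper (k + S + 1) m, hgper k m] at h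
    exact h j
  have Eback : ∀ i jr, i % 2 = jr % 2 → (∀ j, g (jr + S + 1) j = g jr j + 1) →
      (∀ j, g (i + S + 1) j = g i j + 1) := by
    intro i jr hpar hEj
    obtain ⟨w, hw⟩ := hNeven
    have hyge : jr ≤ jr * q ^ n := Nat.le_mul_of_pos_right jr hN0
    have hyev : jr * q ^ n = 2 * (jr * w) := by rw [hw]; ring
    obtain ⟨t, ht⟩ : ∃ t, jr + 2*t = i + jr * q ^ n := by
      refine ⟨(i + jr * q ^ n - jr)/2, ?_⟩
      omega
    have h1 := PE' jr t hEj
    rw [ht] at h1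
    exact EperM jr i h1
  -- case analysis
  by_cases hE0 : ∀ j, g (0 + S + 1) j = g 0 j + 1 <;>
    by_cases hE1 : ∀ j, g (1 + S + 1) j = g 1 j + 1
  · -- all E : contradiction via iteration
    have hall : ∀ k j, g (k + (S+1)) j = g k j + 1 := by
      intro k
      rcases Nat.even_or_odd k with ⟨t, ht⟩ | ⟨t, ht⟩
      · exact Eback k 0 (by omega) hE0
      · exact Eback k 1 (by omega) hE1
    have hiter := iterAdd g (S+1) hall q 0
    have hg0 : g (0 + q * (S+1)) = g 0 := by
      funext j
      rw [hiter j, ZMod.natCast_self, add_zero]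
    have hmod := hginj _ _ hg0
    have harith : q * (S + 1) = q ^ n + q := by
      rw [Nat.mul_add, hqS]; omega
    rw [harith] at hmod
    have e2 : (0 + (q ^ n + q)) % q ^ n = q := by
      rw [Nat.zero_add, Nat.add_mod_left]
      exact Nat.mod_eq_of_lt hqN
    rw [e2, Nat.zero_mod] at hmod
    omega
  · -- E on evens, M on odds : apply key to g
    exact key q n hq hqeven (by omega) hnodd g hu hne
      (fun k hk => Eback k 0 (by omega) hE0)
      (by
        intro k hk j
        have hnEk1 : ¬ ∀ j, g ((k+1) + S + 1) j = g (k+1) j + 1 := by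
          intro h
          exact hE1 (Eback 1 (k+1) (by omega) h)
        have hm := (hqcg (k+1)).resolve_left hnEk1
        have e : k + 1 + S - 1 = k + S := by omega
        rw [e] at hm
        exact hm j)
  · -- E on odds, M on evens : apply key to g ∘ (+1)
    refine key q n hq hqeven (by omega) hnodd (fun k => g (k+1)) (fun k => hu (k+1))
      (fun k => hne (k+1)) ?_ ?_
    · intro k hk j
      have h := Eback (k+1) 1 (by omega) hE1 j
      have e : k + 1 + S + 1 = k + S + 1 + 1 := by omega
      rw [e] at h
      exact h
    · intro k hk j
      have hnEk2 : ¬ ∀ j, g ((k+2) + S + 1) j = g (k+2) j + 1 := by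
        intro h
        exact hE0 (Eback 0 (k+2) (by omega) h)
      have hm := (hqcg (k+2)).resolve_left hnEk2
      have e : k + 2 + S - 1 = k + S + 1 := by omega
      rw [e] at hm
      exact hm j
  · -- all M : contradiction via iteration
    have hallnE : ∀ k, ¬ ∀ j, g (k + S + 1) j = g k j + 1 := by
      intro k h
      rcases Nat.even_or_odd k with ⟨t, ht⟩ | ⟨t, ht⟩
      · exact hE0 (Eback 0 k (by omega) h)
      · exact hE1 (Eback 1 k (by omega) h)
    have hallM : ∀ k j, g (k + (S-1)) j = g k j + 1 := by
      intro k j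
      have hm := (hqcg k).resolve_left (hallnE k)
      have e : k + S - 1 = k + (S - 1) := by omega
      rw [e] at hm
      exact hm j
    have hiter := iterAdd g (S-1) hallM q 0
    have hg0 : g (0 + q * (S-1)) = g 0 := by
      funext j
      rw [hiter j, ZMod.natCast_self, add_zero]
    have hmod := hginj _ _ hg0
    have hdvd : q ^ n ∣ q * (S - 1) := by
      apply Nat.dvd_of_mod_eq_zero
      rw [Nat.zero_add, Nat.zero_mod] at hmod
      exact hmod
    have harith : q * (S - 1) = q ^ n - q := by
      rw [Nat.mul_sub, hqS]; omega
    rw [harith] at hdvd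
    have hd2 : q ^ n ∣ q ^ n - (q ^ n - q) := Nat.dvd_sub dvd_rfl hdvd
    have e3 : q ^ n - (q ^ n - q) = q := by omega
    rw [e3] at hd2
    have := Nat.le_of_dvd (by omega) hd2
    omega
end

section
/- If n ≥ 5 and there exists a cyclic adjacent-transposition Gray code for the permutations of {1,…,n} in which the permutation at position i + n!/2 (mod n!) is the reversal of the permutation at position i for all i, then n ≡ 0 or 1 (mod 4). -/
open Equiv Equiv.Perm

private theorem revPerm_decompose' (n : ℕ) :
    (Fin.revPerm : Equiv.Perm (Fin (n+1))) =
      Equiv.Perm.decomposeFin.symm (Fin.last n, Fin.revPerm * finRotate n) := by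
  ext x
  refine Fin.cases ?_ ?_ x
  · simp [Fin.rev_zero]
  · intro i
    rw [Equiv.Perm.decomposeFin_symm_apply_succ]
    cases n with
    | zero => exact i.elim0
    | succ m =>
      simp only [Equiv.Perm.mul_apply, finRotate_succ_apply, Fin.revPerm_apply]
      rcases eq_or_ne i (Fin.last m) with h | h
      · subst h
        have h1 : (Fin.last m + 1 : Fin (m+1)) = 0 := by
          apply Fin.ext; simp [Fin.val_add]
        rw [h1, Fin.rev_zero]
        have h2 : ((Fin.last m).succ : Fin (m+2)) = Fin.last (m+1) := rfl
        rw [h2, swap_apply_right, Fin.rev_last]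
      · have hv : (i : ℕ) < m :=
          lt_of_le_of_ne (Nat.lt_succ_iff.mp i.isLt) (fun hh => h (Fin.ext hh))
        have hadd : ((i + 1 : Fin (m+1)) : ℕ) = (i : ℕ) + 1 := by
          simp [Fin.val_add]; omega
        have h0 : ((i + 1 : Fin (m+1)).rev.succ : Fin (m+2)) ≠ 0 := Fin.succ_ne_zero _
        have hl : ((i + 1 : Fin (m+1)).rev.succ : Fin (m+2)) ≠ Fin.last (m+1) := by
          simp only [Ne, Fin.ext_iff, Fin.val_succ, Fin.val_rev, Fin.val_last, hadd]
          omega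
        rw [swap_apply_of_ne_of_ne h0 hl]
        simp only [Fin.ext_iff, Fin.val_succ, Fin.val_rev, hadd]
        omega

private theorem sign_revPerm' (n : ℕ) :
    Equiv.Perm.sign (Fin.revPerm : Equiv.Perm (Fin n)) = (-1 : ℤˣ)^(n*(n-1)/2) := by
  induction n with
  | zero => simp [Subsingleton.elim (Fin.revPerm) (1 : Equiv.Perm (Fin 0))]
  | succ m ih =>
    rw [revPerm_decompose', Equiv.Perm.decomposeFin.symm_sign]
    cases m with
    | zero =>
      rw [Subsingleton.elim (Fin.revPerm * finRotate 0) (1 : Equiv.Perm (Fin 0))]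
      simp
    | succ k =>
      rw [if_neg (by simp [Fin.ext_iff]), map_mul, ih, sign_finRotate]
      have h3 : (k+1+1)*(k+1+1-1)/2 = (k+1)*(k+1-1)/2 + (k+1) := by
        have e1 : (k+1+1)*(k+1+1-1) = (k+1)*(k+1-1) + 2*(k+1) := by
          simp [Nat.add_sub_cancel]; ring
        have e2 : 2 ∣ (k+1)*(k+1-1) := by
          simpa [Nat.add_sub_cancel, Nat.mul_comm] using (Nat.even_mul_succ_self k).two_dvd
        omega
      rw [h3, pow_add, pow_succ, mul_comm (-1 : ℤˣ), mul_assoc]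
      rw [Nat.add_sub_cancel]

/-- if `n ≥ 5` and there is a cyclic adjacent-transposition Gray code for the
permutations of `n` symbols in which the permutation at separation `n!/2` is always the
reversal, then `n ≡ 0` or `1 (mod 4)`. -/
theorem reverse_perm_gray_code_necessary (n : ℕ) (hn : 5 ≤ n)
    (π : Fin ((Nat.factorial n)) → Equiv.Perm (Fin n))
    (hbij : Function.Bijective π)
    (hgray : ∀ i : Fin ((Nat.factorial n)),
      ∃ j : ℕ, ∃ h : j + 1 < n,
        π ⟨(i.val + 1) % (Nat.factorial n), Nat.mod_lt _ (Nat.factorial_pos n)⟩ =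
          π i * Equiv.swap ⟨j, by omega⟩ ⟨j + 1, h⟩)
    (hrev : ∀ i : Fin ((Nat.factorial n)),
      π ⟨(i.val + (Nat.factorial n) / 2) % (Nat.factorial n), Nat.mod_lt _ (Nat.factorial_pos n)⟩ =
        π i * Fin.revPerm) :
    n % 4 = 0 ∨ n % 4 = 1 := by
  have hN : 0 < Nat.factorial n := Nat.factorial_pos n
  have step : ∀ k : ℕ, ∀ i : Fin (Nat.factorial n),
      Equiv.Perm.sign (π ⟨(i.val + k) % Nat.factorial n, Nat.mod_lt _ (Nat.factorial_pos n)⟩) =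
        (-1 : ℤˣ)^k * Equiv.Perm.sign (π i) := by
    intro k
    induction k with
    | zero =>
      intro i
      have h0 : (⟨(i.val + 0) % Nat.factorial n, Nat.mod_lt _ (Nat.factorial_pos n)⟩ :
          Fin (Nat.factorial n)) = i :=
        Fin.ext (by simp [Nat.mod_eq_of_lt i.isLt])
      rw [h0]; simp
    | succ k ihk =>
      intro i
      obtain ⟨j, hj, hEq⟩ := hgray ⟨(i.val + k) % Nat.factorial n, Nat.mod_lt _ (Nat.factorial_pos n)⟩
      have hEq' : π ⟨((i.val + k) % Nat.factorial n + 1) % Nat.factorial n,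
            Nat.mod_lt _ (Nat.factorial_pos n)⟩ =
          π ⟨(i.val + k) % Nat.factorial n, Nat.mod_lt _ (Nat.factorial_pos n)⟩ *
            Equiv.swap ⟨j, by omega⟩ ⟨j + 1, hj⟩ := hEq
      have hidx : (⟨((i.val + k) % Nat.factorial n + 1) % Nat.factorial n,
            Nat.mod_lt _ (Nat.factorial_pos n)⟩ : Fin (Nat.factorial n)) =
          ⟨(i.val + (k + 1)) % Nat.factorial n, Nat.mod_lt _ (Nat.factorial_pos n)⟩ := by
        apply Fin.ext
        simp only
        rw [Nat.mod_add_mod, ← Nat.add_assoc]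
      rw [← hidx, hEq', map_mul, Equiv.Perm.sign_swap (by simp [Fin.ext_iff]), ihk i, pow_succ]
      exact mul_right_comm _ _ _
  have i0 : Fin (Nat.factorial n) := ⟨0, hN⟩
  have h24 : 24 ∣ Nat.factorial n := by
    have h4 : Nat.factorial 4 ∣ Nat.factorial n := Nat.factorial_dvd_factorial (by omega)
    simpa [Nat.factorial] using h4
  obtain ⟨m, hm⟩ : 8 ∣ Nat.factorial n := dvd_trans ⟨3, rfl⟩ h24
  have hhalf : Nat.factorial n / 2 = 4 * m := by omega
  have key := step (Nat.factorial n / 2) i0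
  rw [hrev i0, map_mul, hhalf, pow_mul] at key
  have hpow4 : (-1 : ℤˣ)^(4 : ℕ) = 1 := by decide
  rw [hpow4, one_pow, one_mul] at key
  have hsign1 : Equiv.Perm.sign (Fin.revPerm : Equiv.Perm (Fin n)) = 1 :=
    mul_left_cancel (a := Equiv.Perm.sign (π i0)) (by rw [key, mul_one])
  rw [sign_revPerm'] at hsign1
  by_contra hcon
  push_neg at hcon
  have hodd : Odd (n * (n - 1) / 2) := by
    have h23 : n % 4 = 2 ∨ n % 4 = 3 := by omega
    rcases h23 with h2 | h2
    · obtain ⟨q, hq⟩ : ∃ q, n = 4 * q + 2 := ⟨n / 4, by omega⟩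
      have e : n * (n - 1) = 2 * ((2 * q + 1) * (4 * q + 1)) := by
        subst hq
        have e' : 4 * q + 2 - 1 = 4 * q + 1 := by omega
        rw [e']; ring
      rw [e, Nat.mul_div_cancel_left _ (by norm_num)]
      exact ⟨4 * q * q + 3 * q, by ring⟩
    · obtain ⟨q, hq⟩ : ∃ q, n = 4 * q + 3 := ⟨n / 4, by omega⟩
      have e : n * (n - 1) = 2 * ((4 * q + 3) * (2 * q + 1)) := by
        subst hq
        have e' : 4 * q + 3 - 1 = 4 * q + 2 := by omega
        rw [e']; ring
      rw [e, Nat.mul_div_cancel_left _ (by norm_num)]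
      exact ⟨4 * q * q + 5 * q + 1, by ring⟩
  rw [hodd.neg_one_pow] at hsign1
  exact absurd hsign1 (by decide)
end
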